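/- arXiv:1512.07322 — 2 statements merged into one kernel-verified Lean document; each statement's English description precedes it below -/
import Mathlib

section
/- For the Laplacian Δ_x and the second-order special conformal transformation C_2 = 2⟨u,x⟩∂_{u_j} - 2u_j⟨x,D_u⟩ + ‖x‖²∂_{x_j} - x_j(2E_x + m - 2), the commutator identity [Δ_x, C_2] = -4x_jΔ_x + 4⟨u,D_x⟩∂_{u_j} - 4u_j⟨D_u,D_x⟩ holds on smooth functions f(x,u) on R^m × R^m. -/
noncomputable section
open scoped BigOperators

/-- Functions `f(x,u)` of two vector variables `x, u ∈ ℝ^m`. -/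
abbrev Fn (m : ℕ) := ((Fin m → ℝ) × (Fin m → ℝ)) → ℝ

/-- The partial derivative `∂_{x_i}`. -/
def Dx {m : ℕ} (i : Fin m) (f : Fn m) : Fn m :=
  fun p => fderiv ℝ f p (Pi.single i 1, 0)

/-- The partial derivative `∂_{u_i}`. -/
def Du {m : ℕ} (i : Fin m) (f : Fn m) : Fn m :=
  fun p => fderiv ℝ f p (0, Pi.single i 1)

/-- The Laplacian in `x`: `Δ_x = ∑ᵢ ∂_{x_i}²`. -/
def DeltaX {m : ℕ} (f : Fn m) : Fn m := fun p => ∑ i, Dx i (Dx i f) p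

/-- The Euler operator `E_x = ∑ᵢ x_i ∂_{x_i}`. -/
def EulerX {m : ℕ} (f : Fn m) : Fn m := fun p => ∑ i, p.1 i * Dx i f p

/-- The operator `⟨u, D_x⟩ = ∑ᵢ u_i ∂_{x_i}`. -/
def uDx {m : ℕ} (f : Fn m) : Fn m := fun p => ∑ i, p.2 i * Dx i f p

/-- The operator `⟨x, D_u⟩ = ∑ᵢ x_i ∂_{u_i}`. -/
def xDu {m : ℕ} (f : Fn m) : Fn m := fun p => ∑ i, p.1 i * Du i f p

/-- The operator `⟨D_u, D_x⟩ = ∑ᵢ ∂_{u_i} ∂_{x_i}`. -/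
def DuDx {m : ℕ} (f : Fn m) : Fn m := fun p => ∑ i, Du i (Dx i f) p

/-- The special conformal transformation
`C_{2n} = 2⟨u,x⟩∂_{u_j} - 2u_j⟨x,D_u⟩ + ‖x‖²∂_{x_j} - x_j(2E_x + m - 2n)`
(for `n = 1` this is the Maxwell-case operator `C_2`, and `C_{2n} = C_2 + (2n-2)x_j`). -/
def SCT {m : ℕ} (n : ℕ) (j : Fin m) (f : Fn m) : Fn m :=
  fun p => 2 * (∑ i, p.2 i * p.1 i) * Du j f p - 2 * p.2 j * xDu f p
    + (∑ i, p.1 i ^ 2) * Dx j f p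
    - p.1 j * (2 * EulerX f p + ((m : ℝ) - 2 * n) * f p)
namespace Aux
variable {m : ℕ}

/-- directional derivative -/
def D (v : (Fin m → ℝ) × (Fin m → ℝ)) (f : Fn m) : Fn m := fun p => fderiv ℝ f p v

def ex (i : Fin m) : (Fin m → ℝ) × (Fin m → ℝ) := (Pi.single i 1, 0)
def eu (i : Fin m) : (Fin m → ℝ) × (Fin m → ℝ) := (0, Pi.single i 1)

lemma Dx_eq (i : Fin m) (f : Fn m) : Dx i f = D (ex i) f := rfl
lemma Du_eq (i : Fin m) (f : Fn m) : Du i f = D (eu i) f := rfl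

lemma D_smooth {f : Fn m} (hf : ContDiff ℝ (⊤ : ℕ∞) f) (v) : ContDiff ℝ (⊤ : ℕ∞) (D v f) :=
  (hf.fderiv_right (le_of_eq (by simp))).clm_apply contDiff_const

lemma dAt {f : Fn m} (hf : ContDiff ℝ (⊤ : ℕ∞) f) (p) : DifferentiableAt ℝ f p :=
  (hf.differentiable (by simp)) p

lemma D_mul {a b : Fn m} {p} (ha : DifferentiableAt ℝ a p) (hb : DifferentiableAt ℝ b p) (v) :
    D v (fun q => a q * b q) p = D v a p * b p + a p * D v b p := by
  unfold D
  rw [fderiv_fun_mul ha hb]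
  simp [mul_comm]
  ring

lemma D_add {a b : Fn m} {p} (ha : DifferentiableAt ℝ a p) (hb : DifferentiableAt ℝ b p) (v) :
    D v (fun q => a q + b q) p = D v a p + D v b p := by
  unfold D; rw [fderiv_fun_add ha hb]; simp

lemma D_sub {a b : Fn m} {p} (ha : DifferentiableAt ℝ a p) (hb : DifferentiableAt ℝ b p) (v) :
    D v (fun q => a q - b q) p = D v a p - D v b p := by
  unfold D; rw [fderiv_fun_sub ha hb]; simp

lemma D_const_mul {g : Fn m} {p} (hg : DifferentiableAt ℝ g p) (c : ℝ) (v) :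
    D v (fun q => c * g q) p = c * D v g p := by
  unfold D; rw [fderiv_const_mul hg]; simp

lemma D_sum {ι : Type*} (s : Finset ι) (g : ι → Fn m) {p}
    (hg : ∀ i ∈ s, DifferentiableAt ℝ (g i) p) (v) :
    D v (fun q => ∑ i ∈ s, g i q) p = ∑ i ∈ s, D v (g i) p := by
  unfold D
  rw [fderiv_fun_sum hg]
  simp

lemma D_coord1 (k : Fin m) (v) (p) :
    D v (fun q : (Fin m → ℝ) × (Fin m → ℝ) => q.1 k) p = v.1 k := by
  have : (fun q : (Fin m → ℝ) × (Fin m → ℝ) => q.1 k)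
      = fun q => ((ContinuousLinearMap.proj k).comp
          (ContinuousLinearMap.fst ℝ (Fin m → ℝ) (Fin m → ℝ))) q := rfl
  unfold D
  rw [this, ContinuousLinearMap.fderiv]
  rfl

lemma D_coord2 (k : Fin m) (v) (p) :
    D v (fun q : (Fin m → ℝ) × (Fin m → ℝ) => q.2 k) p = v.2 k := by
  have : (fun q : (Fin m → ℝ) × (Fin m → ℝ) => q.2 k)
      = fun q => ((ContinuousLinearMap.proj k).comp
          (ContinuousLinearMap.snd ℝ (Fin m → ℝ) (Fin m → ℝ))) q := rfl
  unfold D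
  rw [this, ContinuousLinearMap.fderiv]
  rfl

lemma D_swap {f : Fn m} (hf : ContDiff ℝ (⊤ : ℕ∞) f) (v w p) : D v (D w f) p = D w (D v f) p := by
  have hd : ∀ q, HasFDerivAt f (fderiv ℝ f q) q := fun q =>
    (hf.differentiable (by simp) q).hasFDerivAt
  have h2 : DifferentiableAt ℝ (fderiv ℝ f) p :=
    ((hf.fderiv_right (m := (⊤ : ℕ∞)) (le_of_eq (by simp))).differentiable (by simp)) p
  have hsym := second_derivative_symmetric hd h2.hasFDerivAt
  have key : ∀ b a : (Fin m → ℝ) × (Fin m → ℝ),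
      D b (D a f) p = fderiv ℝ (fderiv ℝ f) p b a := by
    intro b a
    show fderiv ℝ (fun q => (fderiv ℝ f q) a) p b = _
    rw [fderiv_clm_apply h2 (differentiableAt_const a)]
    simp
  rw [key v w, hsym, ← key w v]

-- smoothness of coordinates
lemma sx (k : Fin m) : ContDiff ℝ (⊤ : ℕ∞) (fun q : (Fin m → ℝ) × (Fin m → ℝ) => q.1 k) :=
  ((ContinuousLinearMap.proj k).comp
    (ContinuousLinearMap.fst ℝ (Fin m → ℝ) (Fin m → ℝ))).contDiff

lemma su (k : Fin m) : ContDiff ℝ (⊤ : ℕ∞) (fun q : (Fin m → ℝ) × (Fin m → ℝ) => q.2 k) :=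
  ((ContinuousLinearMap.proj k).comp
    (ContinuousLinearMap.snd ℝ (Fin m → ℝ) (Fin m → ℝ))).contDiff

end Aux

namespace Aux
variable {m : ℕ}

lemma DeltaX_eq (f : Fn m) (p) : DeltaX f p = ∑ i, D (ex i) (D (ex i) f) p := rfl

lemma DeltaX_add {a b : Fn m} (ha : ContDiff ℝ (⊤ : ℕ∞) a) (hb : ContDiff ℝ (⊤ : ℕ∞) b) (p) :
    DeltaX (fun q => a q + b q) p = DeltaX a p + DeltaX b p := by
  rw [DeltaX_eq, DeltaX_eq, DeltaX_eq, ← Finset.sum_add_distrib]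
  refine Finset.sum_congr rfl fun i _ => ?_
  have h1 : D (ex i) (fun q => a q + b q) = fun q => D (ex i) a q + D (ex i) b q := by
    funext q; exact D_add (dAt ha q) (dAt hb q) _
  rw [h1, D_add (dAt (D_smooth ha _) p) (dAt (D_smooth hb _) p)]

lemma DeltaX_sub {a b : Fn m} (ha : ContDiff ℝ (⊤ : ℕ∞) a) (hb : ContDiff ℝ (⊤ : ℕ∞) b) (p) :
    DeltaX (fun q => a q - b q) p = DeltaX a p - DeltaX b p := by
  rw [DeltaX_eq, DeltaX_eq, DeltaX_eq, ← Finset.sum_sub_distrib]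
  refine Finset.sum_congr rfl fun i _ => ?_
  have h1 : D (ex i) (fun q => a q - b q) = fun q => D (ex i) a q - D (ex i) b q := by
    funext q; exact D_sub (dAt ha q) (dAt hb q) _
  rw [h1, D_sub (dAt (D_smooth ha _) p) (dAt (D_smooth hb _) p)]

lemma DeltaX_const_mul {g : Fn m} (hg : ContDiff ℝ (⊤ : ℕ∞) g) (c : ℝ) (p) :
    DeltaX (fun q => c * g q) p = c * DeltaX g p := by
  rw [DeltaX_eq, DeltaX_eq, Finset.mul_sum]
  refine Finset.sum_congr rfl fun i _ => ?_
  have h1 : D (ex i) (fun q => c * g q) = fun q => c * D (ex i) g q := by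
    funext q; exact D_const_mul (dAt hg q) c _
  rw [h1, D_const_mul (dAt (D_smooth hg _) p) c]

lemma DeltaX_sum {ι : Type*} (s : Finset ι) (g : ι → Fn m)
    (hg : ∀ i ∈ s, ContDiff ℝ (⊤ : ℕ∞) (g i)) (p) :
    DeltaX (fun q => ∑ i ∈ s, g i q) p = ∑ i ∈ s, DeltaX (g i) p := by
  rw [DeltaX_eq]
  have h1 : ∀ i : Fin m, D (ex i) (D (ex i) fun q => ∑ k ∈ s, g k q) p
      = ∑ k ∈ s, D (ex i) (D (ex i) (g k)) p := by
    intro i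
    have e1 : D (ex i) (fun q => ∑ k ∈ s, g k q) = fun q => ∑ k ∈ s, D (ex i) (g k) q := by
      funext q; exact D_sum s g (fun k hk => dAt (hg k hk) q) _
    rw [e1, D_sum s (fun k => D (ex i) (g k)) (fun k hk => dAt (D_smooth (hg k hk) _) p)]
  rw [Finset.sum_congr rfl fun i _ => h1 i, Finset.sum_comm]
  exact Finset.sum_congr rfl fun k _ => (DeltaX_eq _ _).symm

lemma DeltaX_mul {c g : Fn m} (hc : ContDiff ℝ (⊤ : ℕ∞) c) (hg : ContDiff ℝ (⊤ : ℕ∞) g) (p) :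
    DeltaX (fun q => c q * g q) p
      = DeltaX c p * g p + 2 * ∑ i, D (ex i) c p * D (ex i) g p + c p * DeltaX g p := by
  have h2 : ∀ i : Fin m, D (ex i) (D (ex i) fun q => c q * g q) p
      = D (ex i) (D (ex i) c) p * g p + D (ex i) c p * D (ex i) g p
        + (D (ex i) c p * D (ex i) g p + c p * D (ex i) (D (ex i) g) p) := by
    intro i
    have h1 : D (ex i) (fun q => c q * g q)
        = fun q => D (ex i) c q * g q + c q * D (ex i) g q := by
      funext q; exact D_mul (dAt hc q) (dAt hg q) _
    rw [h1, D_add (a := fun q => D (ex i) c q * g q) (b := fun q => c q * D (ex i) g q)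
          ((dAt (D_smooth hc _) p).mul (dAt hg p))
          ((dAt hc p).mul (dAt (D_smooth hg _) p)),
        D_mul (dAt (D_smooth hc _) p) (dAt hg p),
        D_mul (dAt hc p) (dAt (D_smooth hg _) p)]
  rw [DeltaX_eq, Finset.sum_congr rfl fun i _ => h2 i]
  simp only [Finset.sum_add_distrib, ← Finset.sum_mul, ← Finset.mul_sum, ← DeltaX_eq]
  ring

lemma DeltaX_D {f : Fn m} (hf : ContDiff ℝ (⊤ : ℕ∞) f) (v p) :
    DeltaX (D v f) p = D v (DeltaX f) p := by
  rw [DeltaX_eq]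
  have h1 : ∀ i : Fin m, D (ex i) (D (ex i) (D v f)) p = D v (D (ex i) (D (ex i) f)) p := by
    intro i
    have e1 : D (ex i) (D v f) = D v (D (ex i) f) := by
      funext q; exact D_swap hf _ _ q
    rw [e1]
    exact D_swap (D_smooth hf _) _ _ p
  rw [Finset.sum_congr rfl fun i _ => h1 i]
  rw [← D_sum Finset.univ (fun i => D (ex i) (D (ex i) f))
        (fun i _ => dAt (D_smooth (D_smooth hf _) _) p) v]
  rfl

end Aux

namespace Aux
variable {m : ℕ}

lemma D_const (c : ℝ) (v) (p) : D (m := m) v (fun _ => c) p = 0 := by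
  unfold D; rw [fderiv_fun_const]; simp

lemma ex1 (i k : Fin m) : (ex i).1 k = (Pi.single i 1 : Fin m → ℝ) k := rfl
lemma ex2 (i k : Fin m) : (ex i).2 k = 0 := rfl
lemma eu1 (i k : Fin m) : (eu i).1 k = 0 := rfl
lemma eu2 (i k : Fin m) : (eu i).2 k = (Pi.single i 1 : Fin m → ℝ) k := rfl

lemma sum_single_mul (k : Fin m) (A : Fin m → ℝ) :
    ∑ i, (Pi.single i 1 : Fin m → ℝ) k * A i = A k := by
  simp [Pi.single_apply, ite_mul]

lemma sum_mul_single (k : Fin m) (A : Fin m → ℝ) :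
    ∑ i, A i * (Pi.single i 1 : Fin m → ℝ) k = A k := by
  simp [Pi.single_apply, mul_ite]

-- coefficient c1 q = ∑ k, q.2 k * q.1 k
lemma sum_single_at_mul (i : Fin m) (A : Fin m → ℝ) :
    ∑ k, (Pi.single i 1 : Fin m → ℝ) k * A k = A i := by
  simp [Pi.single_apply, ite_mul]

lemma sum_mul_single_at (i : Fin m) (A : Fin m → ℝ) :
    ∑ k, A k * (Pi.single i 1 : Fin m → ℝ) k = A i := by
  simp [Pi.single_apply, mul_ite]

lemma sc1 : ContDiff ℝ (⊤ : ℕ∞) (fun q : (Fin m → ℝ) × (Fin m → ℝ) => ∑ k, q.2 k * q.1 k) :=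
  ContDiff.sum fun k _ => (su k).mul (sx k)

lemma D_c1 (v) (p) : D v (fun q : (Fin m → ℝ) × (Fin m → ℝ) => ∑ k, q.2 k * q.1 k) p
    = ∑ k, (v.2 k * p.1 k + p.2 k * v.1 k) := by
  rw [D_sum Finset.univ (fun k => fun q => q.2 k * q.1 k)
      (fun k _ => dAt ((su k).mul (sx k)) p)]
  exact Finset.sum_congr rfl fun k _ => by
    rw [D_mul (dAt (su k) p) (dAt (sx k) p), D_coord2, D_coord1]

lemma Dx_c1 (i : Fin m) (p) :
    D (ex i) (fun q : (Fin m → ℝ) × (Fin m → ℝ) => ∑ k, q.2 k * q.1 k) p = p.2 i := by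
  rw [D_c1]
  simp only [ex1, ex2, zero_mul, zero_add]
  exact sum_mul_single_at i _

lemma DeltaX_c1 (p) :
    DeltaX (fun q : (Fin m → ℝ) × (Fin m → ℝ) => ∑ k, q.2 k * q.1 k) p = 0 := by
  rw [DeltaX_eq]
  refine Finset.sum_eq_zero fun i _ => ?_
  have e1 : D (ex i) (fun q : (Fin m → ℝ) × (Fin m → ℝ) => ∑ k, q.2 k * q.1 k)
      = fun q => q.2 i := funext fun q => Dx_c1 i q
  rw [e1, D_coord2]
  rfl

-- coefficient c3 q = ∑ k, q.1 k * q.1 k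
lemma sc3 : ContDiff ℝ (⊤ : ℕ∞) (fun q : (Fin m → ℝ) × (Fin m → ℝ) => ∑ k, q.1 k * q.1 k) :=
  ContDiff.sum fun k _ => (sx k).mul (sx k)

lemma D_c3 (v) (p) : D v (fun q : (Fin m → ℝ) × (Fin m → ℝ) => ∑ k, q.1 k * q.1 k) p
    = ∑ k, (v.1 k * p.1 k + p.1 k * v.1 k) := by
  rw [D_sum Finset.univ (fun k => fun q => q.1 k * q.1 k)
      (fun k _ => dAt ((sx k).mul (sx k)) p)]
  exact Finset.sum_congr rfl fun k _ => by
    rw [D_mul (dAt (sx k) p) (dAt (sx k) p), D_coord1]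

lemma Dx_c3 (i : Fin m) (p) :
    D (ex i) (fun q : (Fin m → ℝ) × (Fin m → ℝ) => ∑ k, q.1 k * q.1 k) p = 2 * p.1 i := by
  rw [D_c3, Finset.sum_add_distrib]
  simp only [ex1]
  rw [sum_single_at_mul, sum_mul_single_at]
  ring

lemma DeltaX_c3 (p) :
    DeltaX (fun q : (Fin m → ℝ) × (Fin m → ℝ) => ∑ k, q.1 k * q.1 k) p = 2 * m := by
  rw [DeltaX_eq]
  have e1 : ∀ i : Fin m, D (ex i) (D (ex i)
      (fun q : (Fin m → ℝ) × (Fin m → ℝ) => ∑ k, q.1 k * q.1 k)) p = 2 := by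
    intro i
    have e2 : D (ex i) (fun q : (Fin m → ℝ) × (Fin m → ℝ) => ∑ k, q.1 k * q.1 k)
        = fun q => 2 * q.1 i := funext fun q => Dx_c3 i q
    rw [e2, D_const_mul (dAt (sx i) p), D_coord1, ex1, Pi.single_eq_same]
    norm_num
  rw [Finset.sum_congr rfl fun i _ => e1 i]
  simp [mul_comm]

-- coordinate coefficients
lemma DeltaX_X (k : Fin m) (p) :
    DeltaX (fun q : (Fin m → ℝ) × (Fin m → ℝ) => q.1 k) p = 0 := by
  rw [DeltaX_eq]
  refine Finset.sum_eq_zero fun i _ => ?_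
  have e1 : D (ex i) (fun q : (Fin m → ℝ) × (Fin m → ℝ) => q.1 k)
      = fun _ => (Pi.single i 1 : Fin m → ℝ) k := funext fun q => D_coord1 k _ q
  rw [e1, D_const]

lemma DeltaX_U (k : Fin m) (p) :
    DeltaX (fun q : (Fin m → ℝ) × (Fin m → ℝ) => q.2 k) p = 0 := by
  rw [DeltaX_eq]
  refine Finset.sum_eq_zero fun i _ => ?_
  have e1 : D (ex i) (fun q : (Fin m → ℝ) × (Fin m → ℝ) => q.2 k)
      = fun _ => (0:ℝ) := funext fun q => D_coord2 k _ q
  rw [e1, D_const]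

/-- Laplacian of `x_k * g`. -/
lemma DeltaX_coordmul (k : Fin m) {g : Fn m} (hg : ContDiff ℝ (⊤ : ℕ∞) g) (p) :
    DeltaX (fun q => q.1 k * g q) p = 2 * D (ex k) g p + p.1 k * DeltaX g p := by
  rw [DeltaX_mul (sx k) hg, DeltaX_X]
  have e1 : (∑ i, D (ex i) (fun q : (Fin m → ℝ) × (Fin m → ℝ) => q.1 k) p * D (ex i) g p)
      = D (ex k) g p := by
    rw [Finset.sum_congr rfl fun i _ => by rw [D_coord1]]
    exact sum_single_mul k _
  rw [e1]
  ring

end Aux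

open Aux

/-- The commutator identity `[Δ_x, C_2] = -4x_jΔ_x + 4⟨u,D_x⟩∂_{u_j} - 4u_j⟨D_u,D_x⟩`
on smooth functions `f(x,u)`. -/
theorem laplacian_SCT_commutator (m : ℕ) (j : Fin m) (f : Fn m)
    (hf : ContDiff ℝ (⊤ : ℕ∞) f) :
    ∀ p, DeltaX (SCT 1 j f) p - SCT 1 j (DeltaX f) p
      = -4 * p.1 j * DeltaX f p + 4 * uDx (Du j f) p - 4 * p.2 j * DuDx f p := by
  intro p
  have sDx : ∀ i : Fin m, ContDiff ℝ (⊤ : ℕ∞) (D (ex i) f) := fun i => D_smooth hf _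
  have sDu : ∀ i : Fin m, ContDiff ℝ (⊤ : ℕ∞) (D (eu i) f) := fun i => D_smooth hf _
  have sE : ContDiff ℝ (⊤ : ℕ∞) (fun q : (Fin m → ℝ) × (Fin m → ℝ) => ∑ i, q.1 i * D (ex i) f q) :=
    ContDiff.sum fun i _ => (sx i).mul (sDx i)
  have sXU : ContDiff ℝ (⊤ : ℕ∞) (fun q : (Fin m → ℝ) × (Fin m → ℝ) => ∑ i, q.1 i * D (eu i) f q) :=
    ContDiff.sum fun i _ => (sx i).mul (sDu i)
  have sT1 : ContDiff ℝ (⊤ : ℕ∞) (fun q : (Fin m → ℝ) × (Fin m → ℝ) =>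
      2 * (∑ i, q.2 i * q.1 i) * D (eu j) f q) := (contDiff_const.mul sc1).mul (sDu j)
  have sT2 : ContDiff ℝ (⊤ : ℕ∞) (fun q : (Fin m → ℝ) × (Fin m → ℝ) =>
      2 * q.2 j * (∑ i, q.1 i * D (eu i) f q)) := (contDiff_const.mul (su j)).mul sXU
  have sT3 : ContDiff ℝ (⊤ : ℕ∞) (fun q : (Fin m → ℝ) × (Fin m → ℝ) =>
      (∑ i, q.1 i * q.1 i) * D (ex j) f q) := sc3.mul (sDx j)
  have sh2 : ContDiff ℝ (⊤ : ℕ∞) (fun q : (Fin m → ℝ) × (Fin m → ℝ) =>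
      2 * (∑ i, q.1 i * D (ex i) f q) + ((m : ℝ) - 2 * 1) * f q) :=
    (contDiff_const.mul sE).add (contDiff_const.mul hf)
  have sT4 : ContDiff ℝ (⊤ : ℕ∞) (fun q : (Fin m → ℝ) × (Fin m → ℝ) =>
      q.1 j * (2 * (∑ i, q.1 i * D (ex i) f q) + ((m : ℝ) - 2 * 1) * f q)) := (sx j).mul sh2
  -- part A
  have hA : DeltaX (fun q : (Fin m → ℝ) × (Fin m → ℝ) =>
        2 * (∑ i, q.2 i * q.1 i) * D (eu j) f q) p
      = 4 * (∑ i, p.2 i * D (ex i) (D (eu j) f) p)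
        + 2 * (∑ i, p.2 i * p.1 i) * D (eu j) (DeltaX f) p := by
    have eA : (fun q : (Fin m → ℝ) × (Fin m → ℝ) => 2 * (∑ i, q.2 i * q.1 i) * D (eu j) f q)
        = fun q => 2 * ((∑ i, q.2 i * q.1 i) * D (eu j) f q) := by
      funext q; ring
    have eS : (∑ i, D (ex i) (fun q : (Fin m → ℝ) × (Fin m → ℝ) => ∑ k, q.2 k * q.1 k) p
          * D (ex i) (D (eu j) f) p)
        = ∑ i, p.2 i * D (ex i) (D (eu j) f) p :=
      Finset.sum_congr rfl fun i _ => by rw [Dx_c1]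
    rw [eA, DeltaX_const_mul (sc1.mul (sDu j)) 2 p, DeltaX_mul sc1 (sDu j) p, DeltaX_c1, eS,
        DeltaX_D hf (eu j) p]
    ring
  -- Laplacian of ⟨x,D_u⟩ f
  have hxDu : DeltaX (fun q : (Fin m → ℝ) × (Fin m → ℝ) => ∑ i, q.1 i * D (eu i) f q) p
      = 2 * (∑ i, D (eu i) (D (ex i) f) p) + ∑ i, p.1 i * D (eu i) (DeltaX f) p := by
    rw [DeltaX_sum Finset.univ (fun i => fun q => q.1 i * D (eu i) f q)
        (fun i _ => (sx i).mul (sDu i)) p,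
      Finset.sum_congr rfl (fun i _ => by
        rw [DeltaX_coordmul i (sDu i) p, D_swap hf (ex i) (eu i) p, DeltaX_D hf (eu i) p]),
      Finset.sum_add_distrib, ← Finset.mul_sum]
  -- part B
  have hB : DeltaX (fun q : (Fin m → ℝ) × (Fin m → ℝ) =>
        2 * q.2 j * (∑ i, q.1 i * D (eu i) f q)) p
      = 2 * p.2 j * (2 * (∑ i, D (eu i) (D (ex i) f) p)
          + ∑ i, p.1 i * D (eu i) (DeltaX f) p) := by
    have eZ : (∑ i, D (ex i) (fun q : (Fin m → ℝ) × (Fin m → ℝ) => 2 * q.2 j) p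
          * D (ex i) (fun q : (Fin m → ℝ) × (Fin m → ℝ) => ∑ k, q.1 k * D (eu k) f q) p)
        = 0 := by
      refine Finset.sum_eq_zero fun i _ => ?_
      rw [D_const_mul (dAt (su j) p) 2, D_coord2, ex2]
      ring
    have eC : DeltaX (fun q : (Fin m → ℝ) × (Fin m → ℝ) => 2 * q.2 j) p = 0 := by
      rw [DeltaX_const_mul (su j) 2 p, DeltaX_U]
      ring
    rw [DeltaX_mul (contDiff_const.mul (su j)) sXU p, eZ, eC, hxDu]
    ring
  -- part C
  have hC : DeltaX (fun q : (Fin m → ℝ) × (Fin m → ℝ) =>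
        (∑ i, q.1 i * q.1 i) * D (ex j) f q) p
      = 2 * m * D (ex j) f p + 4 * (∑ i, p.1 i * D (ex i) (D (ex j) f) p)
        + (∑ i, p.1 i * p.1 i) * D (ex j) (DeltaX f) p := by
    have eS : (∑ i, D (ex i) (fun q : (Fin m → ℝ) × (Fin m → ℝ) => ∑ k, q.1 k * q.1 k) p
          * D (ex i) (D (ex j) f) p)
        = 2 * ∑ i, p.1 i * D (ex i) (D (ex j) f) p := by
      rw [Finset.mul_sum]
      refine Finset.sum_congr rfl fun i _ => ?_
      rw [Dx_c3]
      ring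
    rw [DeltaX_mul sc3 (sDx j) p, DeltaX_c3, eS, DeltaX_D hf (ex j) p]
    ring
  -- Laplacian of the Euler part
  have hEuler : DeltaX (fun q : (Fin m → ℝ) × (Fin m → ℝ) => ∑ i, q.1 i * D (ex i) f q) p
      = 2 * DeltaX f p + ∑ i, p.1 i * D (ex i) (DeltaX f) p := by
    rw [DeltaX_sum Finset.univ (fun i => fun q => q.1 i * D (ex i) f q)
        (fun i _ => (sx i).mul (sDx i)) p,
      Finset.sum_congr rfl (fun i _ => by
        rw [DeltaX_coordmul i (sDx i) p, DeltaX_D hf (ex i) p]),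
      Finset.sum_add_distrib, ← Finset.mul_sum, ← DeltaX_eq]
  -- x_j-derivative of the scaling part
  have hDh : D (ex j) (fun q : (Fin m → ℝ) × (Fin m → ℝ) =>
        2 * (∑ i, q.1 i * D (ex i) f q) + ((m : ℝ) - 2 * 1) * f q) p
      = 2 * (D (ex j) f p + ∑ i, p.1 i * D (ex i) (D (ex j) f) p)
        + ((m : ℝ) - 2 * 1) * D (ex j) f p := by
    rw [D_add (dAt (contDiff_const.mul sE) p) (dAt (contDiff_const.mul hf) p),
      D_const_mul (dAt sE p), D_const_mul (dAt hf p),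
      D_sum Finset.univ (fun i => fun q => q.1 i * D (ex i) f q)
        (fun i _ => dAt ((sx i).mul (sDx i)) p),
      Finset.sum_congr rfl (fun i _ => by
        rw [D_mul (dAt (sx i) p) (dAt (sDx i) p), D_coord1, D_swap hf (ex j) (ex i) p]),
      Finset.sum_add_distrib,
      show (∑ i, (ex j).1 i * D (ex i) f p) = D (ex j) f p from by
        simp only [ex1]; exact sum_single_at_mul j _]
  -- Laplacian of the scaling part
  have hDeltah : DeltaX (fun q : (Fin m → ℝ) × (Fin m → ℝ) =>
        2 * (∑ i, q.1 i * D (ex i) f q) + ((m : ℝ) - 2 * 1) * f q) p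
      = 2 * (2 * DeltaX f p + ∑ i, p.1 i * D (ex i) (DeltaX f) p)
        + ((m : ℝ) - 2 * 1) * DeltaX f p := by
    rw [DeltaX_add (contDiff_const.mul sE) (contDiff_const.mul hf) p,
      DeltaX_const_mul sE 2 p, DeltaX_const_mul hf _ p, hEuler]
  -- part D
  have hD : DeltaX (fun q : (Fin m → ℝ) × (Fin m → ℝ) =>
        q.1 j * (2 * (∑ i, q.1 i * D (ex i) f q) + ((m : ℝ) - 2 * 1) * f q)) p
      = 2 * (2 * (D (ex j) f p + ∑ i, p.1 i * D (ex i) (D (ex j) f) p)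
            + ((m : ℝ) - 2 * 1) * D (ex j) f p)
        + p.1 j * (2 * (2 * DeltaX f p + ∑ i, p.1 i * D (ex i) (DeltaX f) p)
            + ((m : ℝ) - 2 * 1) * DeltaX f p) := by
    rw [DeltaX_coordmul j sh2 p, hDh, hDeltah]
  -- assemble
  have eSCT : SCT 1 j f = fun q : (Fin m → ℝ) × (Fin m → ℝ) =>
      2 * (∑ i, q.2 i * q.1 i) * D (eu j) f q - 2 * q.2 j * (∑ i, q.1 i * D (eu i) f q)
      + (∑ i, q.1 i * q.1 i) * D (ex j) f q
      - q.1 j * (2 * (∑ i, q.1 i * D (ex i) f q) + ((m : ℝ) - 2 * 1) * f q) := by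
    funext q
    simp only [SCT, xDu, EulerX, Dx_eq, Du_eq, pow_two, Nat.cast_one]
  simp only [SCT, xDu, EulerX, uDx, DuDx, Dx_eq, Du_eq, pow_two, Nat.cast_one]
  rw [eSCT, DeltaX_sub ((sT1.sub sT2).add sT3) sT4 p, DeltaX_add (sT1.sub sT2) sT3 p,
    DeltaX_sub sT1 sT2 p, hA, hB, hC, hD]
  ring
end
end

section
/- On smooth functions f(x,u) of degree 1 in u, the commutator of the operator ⟨u,D_x⟩⟨D_u,D_x⟩Δ_x^{n-1} with C_{2n} equals -4n x_j⟨u,D_x⟩⟨D_u,D_x⟩Δ_x^{n-1} + (m+2n-2)(⟨u,D_x⟩∂_{u_j} - u_j⟨D_u,D_x⟩)Δ_x^{n-1}. -/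
noncomputable section
open scoped BigOperators

variable {m : ℕ}
def pd (i : Fin m) (H : (Fin m → ℝ) → ℝ) : (Fin m → ℝ) → ℝ :=
  fun x => fderiv ℝ H x (Pi.single i 1)
def lap (H : (Fin m → ℝ) → ℝ) : (Fin m → ℝ) → ℝ := fun x => ∑ i, pd i (pd i H) x

@[fun_prop] theorem smooth_pd (i : Fin m) (H : (Fin m → ℝ) → ℝ) (hH : ContDiff ℝ (⊤ : ℕ∞) H) :
    ContDiff ℝ (⊤ : ℕ∞) (pd i H) := (hH.fderiv_right (by simp)).clm_apply contDiff_const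

@[fun_prop] theorem smooth_sum {ι : Type*} (s : Finset ι) (F : ι → (Fin m → ℝ) → ℝ)
    (hF : ∀ i, ContDiff ℝ (⊤ : ℕ∞) (F i)) : ContDiff ℝ (⊤ : ℕ∞) (fun x => ∑ i ∈ s, F i x) :=
  ContDiff.sum fun i _ => hF i

@[fun_prop] theorem smooth_lap (H : (Fin m → ℝ) → ℝ) (hH : ContDiff ℝ (⊤ : ℕ∞) H) :
    ContDiff ℝ (⊤ : ℕ∞) (lap H) := by
  unfold lap; apply ContDiff.sum; intro i _; fun_prop

@[fun_prop] theorem smooth_lapIter (k : ℕ) (H : (Fin m → ℝ) → ℝ) (hH : ContDiff ℝ (⊤ : ℕ∞) H) :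
    ContDiff ℝ (⊤ : ℕ∞) (lap^[k] H) := by
  induction k generalizing H with
  | zero => simpa
  | succ k ih => rw [Function.iterate_succ_apply]; exact ih _ (smooth_lap _ hH)

theorem da {H : (Fin m → ℝ) → ℝ} (hH : ContDiff ℝ (⊤ : ℕ∞) H) (x : Fin m → ℝ) :
    DifferentiableAt ℝ H x := (hH.differentiable (by simp)).differentiableAt

theorem pd_add (i : Fin m) (H K : (Fin m → ℝ) → ℝ) (hH : ContDiff ℝ (⊤ : ℕ∞) H)
    (hK : ContDiff ℝ (⊤ : ℕ∞) K) (x : Fin m → ℝ) :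
    pd i (fun y => H y + K y) x = pd i H x + pd i K x := by
  simp [pd, fderiv_fun_add (da hH x) (da hK x)]

theorem pd_sub (i : Fin m) (H K : (Fin m → ℝ) → ℝ) (hH : ContDiff ℝ (⊤ : ℕ∞) H)
    (hK : ContDiff ℝ (⊤ : ℕ∞) K) (x : Fin m → ℝ) :
    pd i (fun y => H y - K y) x = pd i H x - pd i K x := by
  simp [pd, fderiv_fun_sub (da hH x) (da hK x)]

theorem pd_mul (i : Fin m) (H K : (Fin m → ℝ) → ℝ) (hH : ContDiff ℝ (⊤ : ℕ∞) H)
    (hK : ContDiff ℝ (⊤ : ℕ∞) K) (x : Fin m → ℝ) :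
    pd i (fun y => H y * K y) x = pd i H x * K x + H x * pd i K x := by
  simp [pd, fderiv_fun_mul (da hH x) (da hK x)]; ring

theorem pd_const_mul (i : Fin m) (c : ℝ) (H : (Fin m → ℝ) → ℝ) (hH : ContDiff ℝ (⊤ : ℕ∞) H)
    (x : Fin m → ℝ) : pd i (fun y => c * H y) x = c * pd i H x := by
  simp [pd, fderiv_const_mul (da hH x) c]

theorem pd_const (i : Fin m) (c : ℝ) (x : Fin m → ℝ) :
    pd i (fun _ => c) x = 0 := by simp [pd]

theorem pd_sum (i : Fin m) {ι : Type*} (s : Finset ι) (F : ι → (Fin m → ℝ) → ℝ)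
    (hF : ∀ l, ContDiff ℝ (⊤ : ℕ∞) (F l)) (x : Fin m → ℝ) :
    pd i (fun y => ∑ l ∈ s, F l y) x = ∑ l ∈ s, pd i (F l) x := by
  simp [pd, fderiv_fun_sum (fun l _ => da (hF l) x)]

theorem pd_coord (i k : Fin m) (x : Fin m → ℝ) :
    pd i (fun y => y k) x = if k = i then 1 else 0 := by
  have : (fun y : Fin m → ℝ => y k) = (ContinuousLinearMap.proj k :
      (Fin m → ℝ) →L[ℝ] ℝ) := rfl
  rw [pd, this, ContinuousLinearMap.fderiv]
  simp [Pi.single_apply]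

theorem pd_comm (i k : Fin m) (H : (Fin m → ℝ) → ℝ) (hH : ContDiff ℝ (⊤ : ℕ∞) H) (x : Fin m → ℝ) :
    pd i (pd k H) x = pd k (pd i H) x := by
  have hd : DifferentiableAt ℝ (fderiv ℝ H) x :=
    ((hH.fderiv_right (m := (⊤ : ℕ∞)) (by simp)).differentiable (by simp)).differentiableAt
  have expand : ∀ (v w : Fin m → ℝ),
      fderiv ℝ (fun y => fderiv ℝ H y v) x w = fderiv ℝ (fderiv ℝ H) x w v := by
    intro v w
    rw [fderiv_clm_apply hd (differentiableAt_const v)]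
    simp
  have hsymm := second_derivative_symmetric
    (f := H) (f' := fderiv ℝ H) (f'' := fderiv ℝ (fderiv ℝ H) x)
    (fun y => (da hH y).hasFDerivAt) hd.hasFDerivAt (Pi.single i 1) (Pi.single k 1)
  show fderiv ℝ (fun y => fderiv ℝ H y (Pi.single k 1)) x (Pi.single i 1)
      = fderiv ℝ (fun y => fderiv ℝ H y (Pi.single i 1)) x (Pi.single k 1)
  rw [expand, expand, hsymm]

/-! ### lap-level lemmas -/

theorem lap_apply (H : (Fin m → ℝ) → ℝ) (x : Fin m → ℝ) :
    lap H x = ∑ i, pd i (pd i H) x := rfl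

theorem pd_lap (i : Fin m) (H : (Fin m → ℝ) → ℝ) (hH : ContDiff ℝ (⊤ : ℕ∞) H) (x : Fin m → ℝ) :
    pd i (lap H) x = lap (pd i H) x := by
  rw [lap_apply, show lap H = fun y => ∑ k, pd k (pd k H) y from rfl,
    pd_sum i Finset.univ _ (by fun_prop)]
  refine Finset.sum_congr rfl fun k _ => ?_
  rw [pd_comm i k (pd k H) (by fun_prop),
    show pd i (pd k H) = pd k (pd i H) from funext (pd_comm i k H hH)]

theorem lap_add (H K : (Fin m → ℝ) → ℝ) (hH : ContDiff ℝ (⊤ : ℕ∞) H) (hK : ContDiff ℝ (⊤ : ℕ∞) K)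
    (x : Fin m → ℝ) : lap (fun y => H y + K y) x = lap H x + lap K x := by
  rw [lap_apply, lap_apply, lap_apply, ← Finset.sum_add_distrib]
  refine Finset.sum_congr rfl fun i _ => ?_
  rw [show pd i (fun y => H y + K y) = fun y => pd i H y + pd i K y
      from funext (pd_add i H K hH hK), pd_add i _ _ (by fun_prop) (by fun_prop)]

theorem lap_sub (H K : (Fin m → ℝ) → ℝ) (hH : ContDiff ℝ (⊤ : ℕ∞) H) (hK : ContDiff ℝ (⊤ : ℕ∞) K)
    (x : Fin m → ℝ) : lap (fun y => H y - K y) x = lap H x - lap K x := by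
  rw [lap_apply, lap_apply, lap_apply, ← Finset.sum_sub_distrib]
  refine Finset.sum_congr rfl fun i _ => ?_
  rw [show pd i (fun y => H y - K y) = fun y => pd i H y - pd i K y
      from funext (pd_sub i H K hH hK), pd_sub i _ _ (by fun_prop) (by fun_prop)]

theorem lap_const_mul (c : ℝ) (H : (Fin m → ℝ) → ℝ) (hH : ContDiff ℝ (⊤ : ℕ∞) H)
    (x : Fin m → ℝ) : lap (fun y => c * H y) x = c * lap H x := by
  rw [lap_apply, lap_apply, Finset.mul_sum]
  refine Finset.sum_congr rfl fun i _ => ?_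
  rw [show pd i (fun y => c * H y) = fun y => c * pd i H y
      from funext (pd_const_mul i c H hH), pd_const_mul i _ _ (by fun_prop)]

theorem lap_sum {ι : Type*} (s : Finset ι) (F : ι → (Fin m → ℝ) → ℝ)
    (hF : ∀ l, ContDiff ℝ (⊤ : ℕ∞) (F l)) (x : Fin m → ℝ) :
    lap (fun y => ∑ l ∈ s, F l y) x = ∑ l ∈ s, lap (F l) x := by
  rw [lap_apply]
  have e1 : (fun y => ∑ l ∈ s, F l y) = fun y => ∑ l ∈ s, F l y := rfl
  have e2 : ∀ i : Fin m, pd i (fun y => ∑ l ∈ s, F l y) = fun y => ∑ l ∈ s, pd i (F l) y :=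
    fun i => funext (pd_sum i s F hF)
  simp only [e2]
  have e3 : ∀ i : Fin m, pd i (fun y => ∑ l ∈ s, pd i (F l) y) x
      = ∑ l ∈ s, pd i (pd i (F l)) x := fun i => pd_sum i s _ (by fun_prop) x
  simp only [e3]
  rw [Finset.sum_comm]
  exact Finset.sum_congr rfl fun l _ => (lap_apply (F l) x).symm

theorem lap_coord_mul (k : Fin m) (H : (Fin m → ℝ) → ℝ) (hH : ContDiff ℝ (⊤ : ℕ∞) H)
    (x : Fin m → ℝ) :
    lap (fun y => y k * H y) x = x k * lap H x + 2 * pd k H x := by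
  rw [lap_apply]
  have e1 : ∀ i : Fin m, pd i (fun y => y k * H y)
      = fun y => (if k = i then 1 else 0) * H y + y k * pd i H y := by
    intro i; funext y
    rw [pd_mul i _ _ (by fun_prop) hH, pd_coord]
  have e2 : ∀ i, pd i (pd i (fun y => y k * H y)) x
      = (if k = i then 1 else 0) * pd i H x + ((if k = i then 1 else 0) * pd i H x
        + x k * pd i (pd i H) x) := by
    intro i
    rw [e1 i, pd_add i _ _ (by fun_prop) (by fun_prop),
      pd_const_mul i _ _ (by fun_prop), pd_mul i _ _ (by fun_prop) (by fun_prop), pd_coord]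
  simp only [e2]
  rw [Finset.sum_add_distrib, Finset.sum_add_distrib]
  simp [ite_mul, Finset.mul_sum, lap_apply, Finset.sum_ite_eq]
  ring

/-! ### Euler operator and norm-square -/

def eul (H : (Fin m → ℝ) → ℝ) : (Fin m → ℝ) → ℝ := fun x => ∑ i, x i * pd i H x
def nsq : (Fin m → ℝ) → ℝ := fun x => ∑ i, x i * x i

@[fun_prop] theorem smooth_eul (H : (Fin m → ℝ) → ℝ) (hH : ContDiff ℝ (⊤ : ℕ∞) H) :
    ContDiff ℝ (⊤ : ℕ∞) (eul H) := by unfold eul; fun_prop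

@[fun_prop] theorem smooth_nsq : ContDiff ℝ (⊤ : ℕ∞) (nsq (m := m)) := by unfold nsq; fun_prop

theorem lap_euler (H : (Fin m → ℝ) → ℝ) (hH : ContDiff ℝ (⊤ : ℕ∞) H) (x : Fin m → ℝ) :
    lap (eul H) x = eul (lap H) x + 2 * lap H x := by
  have e0 : eul H = fun y => ∑ i, y i * pd i H y := rfl
  rw [e0, lap_sum Finset.univ _ (by fun_prop) x]
  have e1 : ∀ i : Fin m, lap (fun y => y i * pd i H y) x
      = x i * lap (pd i H) x + 2 * pd i (pd i H) x :=
    fun i => lap_coord_mul i _ (by fun_prop) x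
  simp only [e1]
  rw [Finset.sum_add_distrib]
  have e2 : ∀ i : Fin m, lap (pd i H) x = pd i (lap H) x := fun i => (pd_lap i H hH x).symm
  simp only [e2]
  rw [← Finset.mul_sum]
  rfl

theorem lap_nsq_mul (H : (Fin m → ℝ) → ℝ) (hH : ContDiff ℝ (⊤ : ℕ∞) H) (x : Fin m → ℝ) :
    lap (fun y => nsq y * H y) x = nsq x * lap H x + 4 * eul H x + 2 * m * H x := by
  have e0 : (fun y => nsq y * H y) = fun y => ∑ l, y l * (y l * H y) := by
    funext y; rw [show nsq y = ∑ l, y l * y l from rfl, Finset.sum_mul]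
    exact Finset.sum_congr rfl fun l _ => by ring
  rw [e0, lap_sum Finset.univ _ (by fun_prop) x]
  have e1 : ∀ l : Fin m, lap (fun y => y l * (y l * H y)) x
      = x l * (x l * lap H x + 2 * pd l H x)
        + 2 * (H x + x l * pd l H x) := by
    intro l
    rw [lap_coord_mul l _ (by fun_prop) x,
      show (fun y => y l * H y) = fun y => y l * H y from rfl,
      lap_coord_mul l H hH x,
      pd_mul l _ _ (by fun_prop) hH x, pd_coord]
    simp
  simp only [e1]
  have e3 : ∀ l : Fin m, x l * (x l * lap H x + 2 * pd l H x) + 2 * (H x + x l * pd l H x)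
      = x l * x l * lap H x + 4 * (x l * pd l H x) + 2 * H x := fun l => by ring
  simp only [e3]
  rw [Finset.sum_add_distrib, Finset.sum_add_distrib, ← Finset.sum_mul, ← Finset.mul_sum,
    Finset.sum_const, Finset.card_univ, Fintype.card_fin, nsmul_eq_mul]
  rw [show nsq x = ∑ l, x l * x l from rfl, show eul H x = ∑ l, x l * pd l H x from rfl]
  ring

/-! ### Iterated Laplacian -/

theorem lapIter_succ' (k : ℕ) (H : (Fin m → ℝ) → ℝ) :
    lap^[k+1] H = lap (lap^[k] H) := Function.iterate_succ_apply' lap k H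

theorem lapIter_add (k : ℕ) (H K : (Fin m → ℝ) → ℝ) (hH : ContDiff ℝ (⊤ : ℕ∞) H)
    (hK : ContDiff ℝ (⊤ : ℕ∞) K) :
    lap^[k] (fun y => H y + K y) = fun x => lap^[k] H x + lap^[k] K x := by
  induction k with
  | zero => simp
  | succ k ih =>
    funext x
    rw [lapIter_succ', ih, lapIter_succ', lapIter_succ',
      lap_add _ _ (by fun_prop) (by fun_prop) x]

theorem lapIter_sub (k : ℕ) (H K : (Fin m → ℝ) → ℝ) (hH : ContDiff ℝ (⊤ : ℕ∞) H)
    (hK : ContDiff ℝ (⊤ : ℕ∞) K) :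
    lap^[k] (fun y => H y - K y) = fun x => lap^[k] H x - lap^[k] K x := by
  induction k with
  | zero => simp
  | succ k ih =>
    funext x
    rw [lapIter_succ', ih, lapIter_succ', lapIter_succ',
      lap_sub _ _ (by fun_prop) (by fun_prop) x]

theorem lapIter_const_mul (k : ℕ) (c : ℝ) (H : (Fin m → ℝ) → ℝ) (hH : ContDiff ℝ (⊤ : ℕ∞) H) :
    lap^[k] (fun y => c * H y) = fun x => c * lap^[k] H x := by
  induction k with
  | zero => simp
  | succ k ih =>
    funext x
    rw [lapIter_succ', ih, lapIter_succ', lap_const_mul _ _ (by fun_prop) x]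

theorem lapIter_sum (k : ℕ) {ι : Type*} (s : Finset ι) (F : ι → (Fin m → ℝ) → ℝ)
    (hF : ∀ l, ContDiff ℝ (⊤ : ℕ∞) (F l)) :
    lap^[k] (fun y => ∑ l ∈ s, F l y) = fun x => ∑ l ∈ s, lap^[k] (F l) x := by
  induction k with
  | zero => simp
  | succ k ih =>
    funext x
    rw [lapIter_succ', ih]
    simp only [lapIter_succ']
    exact lap_sum s _ (by fun_prop) x

theorem pd_lapIter (k : ℕ) (i : Fin m) (H : (Fin m → ℝ) → ℝ) (hH : ContDiff ℝ (⊤ : ℕ∞) H) :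
    pd i (lap^[k] H) = lap^[k] (pd i H) := by
  induction k generalizing H with
  | zero => simp
  | succ k ih =>
    funext x
    rw [Function.iterate_succ_apply, Function.iterate_succ_apply, ih _ (by fun_prop)]
    have : pd i (lap H) = lap (pd i H) := funext (pd_lap i H hH)
    rw [this]

/-! ### Iterated commutators -/

theorem lapIter_coord_mul (k : ℕ) (j : Fin m) (H : (Fin m → ℝ) → ℝ) (hH : ContDiff ℝ (⊤ : ℕ∞) H) :
    lap^[k] (fun y => y j * H y)
      = fun x => x j * lap^[k] H x + 2 * (k : ℝ) * lap^[k-1] (pd j H) x := by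
  induction k with
  | zero => funext x; simp
  | succ k ih =>
    funext x
    rw [lapIter_succ', ih, lapIter_succ']
    rw [lap_add _ _ (by fun_prop) (by fun_prop) x,
      lap_const_mul _ _ (by fun_prop) x,
      lap_coord_mul j _ (by fun_prop) x,
      pd_lapIter k j H hH]
    cases k with
    | zero => push_cast; simp
    | succ k' =>
      simp only [Nat.add_sub_cancel, ← lapIter_succ']
      push_cast
      ring

theorem lapIter_euler (k : ℕ) (H : (Fin m → ℝ) → ℝ) (hH : ContDiff ℝ (⊤ : ℕ∞) H) :
    lap^[k] (eul H) = fun x => eul (lap^[k] H) x + 2 * (k : ℝ) * lap^[k] H x := by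
  induction k with
  | zero => funext x; simp
  | succ k ih =>
    funext x
    rw [lapIter_succ', ih]
    rw [lap_add _ _ (by fun_prop) (by fun_prop) x, lap_const_mul _ _ (by fun_prop) x,
      lap_euler _ (by fun_prop) x, ← lapIter_succ']
    push_cast
    ring

theorem lapIter_nsq_mul (k : ℕ) (H : (Fin m → ℝ) → ℝ) (hH : ContDiff ℝ (⊤ : ℕ∞) H) :
    lap^[k] (fun y => nsq y * H y)
      = fun x => nsq x * lap^[k] H x + 4 * (k : ℝ) * eul (lap^[k-1] H) x
        + (2 * m * (k : ℝ) + 4 * (k : ℝ) * ((k : ℝ) - 1)) * lap^[k-1] H x := by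
  induction k with
  | zero => funext x; simp
  | succ k ih =>
    funext x
    rw [lapIter_succ', ih]
    rw [lap_add _ _ (by fun_prop) (by fun_prop) x,
      lap_add _ _ (by fun_prop) (by fun_prop) x,
      lap_const_mul _ _ (by fun_prop) x, lap_const_mul _ _ (by fun_prop) x,
      lap_nsq_mul _ (by fun_prop) x]
    cases k with
    | zero => push_cast; simp
    | succ k' =>
      simp only [Nat.add_sub_cancel, ← lapIter_succ',
        lap_euler _ (smooth_lapIter _ _ hH) ]
      push_cast
      ring


/-! ### auxiliary operator identities -/

theorem pd_nsq (i : Fin m) (x : Fin m → ℝ) : pd i (nsq (m := m)) x = 2 * x i := by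
  rw [show (nsq (m := m)) = fun y => ∑ l, y l * y l from rfl,
    pd_sum i Finset.univ _ (by fun_prop) x]
  have e : ∀ l : Fin m, pd i (fun y => y l * y l) x
      = (if l = i then 1 else 0) * x l + x l * (if l = i then 1 else 0) := by
    intro l
    rw [pd_mul i _ _ (by fun_prop) (by fun_prop) x, pd_coord]
  have e2 : ∀ l : Fin m, (if l = i then (1:ℝ) else 0) * x l + x l * (if l = i then 1 else 0)
      = if l = i then 2 * x l else 0 := by intro l; split <;> ring
  simp only [e, e2, Finset.sum_ite_eq' Finset.univ i, Finset.mem_univ, if_true]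

theorem pd_eul (i : Fin m) (H : (Fin m → ℝ) → ℝ) (hH : ContDiff ℝ (⊤ : ℕ∞) H) (x : Fin m → ℝ) :
    pd i (eul H) x = pd i H x + eul (pd i H) x := by
  rw [show eul H = fun y => ∑ l, y l * pd l H y from rfl,
    pd_sum i Finset.univ _ (by fun_prop) x]
  have e : ∀ l : Fin m, pd i (fun y => y l * pd l H y) x
      = (if l = i then 1 else 0) * pd l H x + x l * pd l (pd i H) x := by
    intro l
    rw [pd_mul i _ _ (by fun_prop) (by fun_prop) x, pd_coord, pd_comm i l H hH]
  simp only [e]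
  rw [Finset.sum_add_distrib]
  simp [Finset.sum_ite_eq, ite_mul, eul]

theorem eul_sum {ι : Type*} (s : Finset ι) (F : ι → (Fin m → ℝ) → ℝ)
    (hF : ∀ l, ContDiff ℝ (⊤ : ℕ∞) (F l)) (x : Fin m → ℝ) :
    eul (fun y => ∑ l ∈ s, F l y) x = ∑ l ∈ s, eul (F l) x := by
  rw [show eul (fun y => ∑ l ∈ s, F l y) x = ∑ i, x i * pd i (fun y => ∑ l ∈ s, F l y) x
      from rfl]
  have e : ∀ i : Fin m, x i * pd i (fun y => ∑ l ∈ s, F l y) x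
      = ∑ l ∈ s, x i * pd i (F l) x := by
    intro i; rw [pd_sum i s F hF x, Finset.mul_sum]
  simp only [e]
  rw [Finset.sum_comm]
  rfl

theorem sum_pd_pd (j : Fin m) (w : Fin m → (Fin m → ℝ) → ℝ)
    (hw : ∀ k, ContDiff ℝ (⊤ : ℕ∞) (w k)) (x : Fin m → ℝ) :
    ∑ k, pd j (pd k (w k)) x = pd j (fun y => ∑ k, pd k (w k) y) x := by
  rw [pd_sum j Finset.univ _ (by fun_prop) x]

theorem aggA (s : ℕ) (H : (Fin m → ℝ) → ℝ) (hH : ContDiff ℝ (⊤ : ℕ∞) H) (x : Fin m → ℝ) :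
    ∑ k, pd k (lap^[s] (pd k H)) x = lap^[s+1] H x := by
  have e : ∀ k : Fin m, pd k (lap^[s] (pd k H)) x = lap^[s] (pd k (pd k H)) x :=
    fun k => congrFun (pd_lapIter s k (pd k H) (by fun_prop)) x
  simp only [e]
  rw [Function.iterate_succ_apply, show lap H = fun y => ∑ k, pd k (pd k H) y from rfl,
    lapIter_sum s Finset.univ _ (by fun_prop)]

/-! ### the four building blocks -/

section KLemmas
variable (g : Fin m → (Fin m → ℝ) → ℝ) (j : Fin m) (q : ℕ)

theorem Ka (hg : ∀ k, ContDiff ℝ (⊤ : ℕ∞) (g k)) (x : Fin m → ℝ) :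
    ∑ k, pd k (lap^[q] (fun y => y k * g j y)) x
      = (m:ℝ) * lap^[q] (g j) x + eul (lap^[q] (g j)) x
        + 2*(q:ℝ) * ∑ k, pd k (lap^[q-1] (pd k (g j))) x := by
  have e : ∀ k : Fin m, pd k (lap^[q] (fun y => y k * g j y)) x
      = (lap^[q] (g j) x + x k * pd k (lap^[q] (g j)) x)
        + 2*(q:ℝ) * pd k (lap^[q-1] (pd k (g j))) x := by
    intro k
    rw [lapIter_coord_mul q k (g j) (hg j),
      pd_add k _ _ (by fun_prop) (by fun_prop) x,
      pd_mul k _ _ (by fun_prop) (by fun_prop) x, pd_coord,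
      pd_const_mul k _ _ (by fun_prop) x]
    simp
  simp only [e]
  rw [Finset.sum_add_distrib, Finset.sum_add_distrib, ← Finset.mul_sum,
    Finset.sum_const, Finset.card_univ, Fintype.card_fin, nsmul_eq_mul,
    show eul (lap^[q] (g j)) x = ∑ k, x k * pd k (lap^[q] (g j)) x from rfl]

theorem Kb (hg : ∀ k, ContDiff ℝ (⊤ : ℕ∞) (g k)) (x : Fin m → ℝ) :
    ∑ k, pd k (lap^[q] (fun y => (if k = j then (1:ℝ) else 0) * (∑ l, y l * g l y))) x
      = lap^[q] (g j) x + (∑ k, x k * pd j (lap^[q] (g k)) x)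
        + 2*(q:ℝ) * ∑ k, pd j (pd k (lap^[q-1] (g k))) x := by
  have e : ∀ k : Fin m,
      pd k (lap^[q] (fun y => (if k = j then (1:ℝ) else 0) * (∑ l, y l * g l y))) x
      = if k = j then pd k (lap^[q] (fun y => ∑ l, y l * g l y)) x else 0 := by
    intro k
    rw [lapIter_const_mul q _ _ (by fun_prop),
      pd_const_mul k _ _ (by fun_prop) x]
    split <;> simp
  simp only [e]
  rw [Finset.sum_ite_eq' Finset.univ j
    (fun k => pd k (lap^[q] (fun y => ∑ l, y l * g l y)) x)]
  simp only [Finset.mem_univ, if_true]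
  have w1 : lap^[q] (fun y => ∑ l, y l * g l y)
      = fun y => ∑ l, (y l * lap^[q] (g l) y + 2*(q:ℝ) * lap^[q-1] (pd l (g l)) y) := by
    rw [lapIter_sum q Finset.univ _ (by fun_prop)]
    funext y
    exact Finset.sum_congr rfl fun l _ => by rw [lapIter_coord_mul q l (g l) (hg l)]
  rw [w1, pd_sum j Finset.univ _ (by fun_prop) x]
  have e2 : ∀ l : Fin m,
      pd j (fun y => y l * lap^[q] (g l) y + 2*(q:ℝ) * lap^[q-1] (pd l (g l)) y) x
      = ((if l = j then 1 else 0) * lap^[q] (g l) x + x l * pd j (lap^[q] (g l)) x)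
        + 2*(q:ℝ) * pd j (pd l (lap^[q-1] (g l))) x := by
    intro l
    rw [pd_add j _ _ (by fun_prop) (by fun_prop) x,
      pd_mul j _ _ (by fun_prop) (by fun_prop) x, pd_coord,
      pd_const_mul j _ _ (by fun_prop) x,
      ← pd_lapIter (q-1) l (g l) (hg l)]
  simp only [e2]
  rw [Finset.sum_add_distrib, Finset.sum_add_distrib, ← Finset.mul_sum]
  simp only [ite_mul, one_mul, zero_mul,
    Finset.sum_ite_eq' Finset.univ j (fun l => lap^[q] (g l) x), Finset.mem_univ, if_true]

theorem Kc (hg : ∀ k, ContDiff ℝ (⊤ : ℕ∞) (g k)) (x : Fin m → ℝ) :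
    ∑ k, pd k (lap^[q] (fun y => nsq y * pd j (g k) y)) x
      = 2 * (∑ k, x k * pd j (lap^[q] (g k)) x)
        + nsq x * (∑ k, pd j (pd k (lap^[q] (g k))) x)
        + 4*(q:ℝ) * (∑ k, pd j (pd k (lap^[q-1] (g k))) x
            + eul (fun y => ∑ k, pd j (pd k (lap^[q-1] (g k))) y) x)
        + (2*(m:ℝ)*(q:ℝ) + 4*(q:ℝ)*((q:ℝ)-1)) * ∑ k, pd j (pd k (lap^[q-1] (g k))) x := by
  have e : ∀ k : Fin m, pd k (lap^[q] (fun y => nsq y * pd j (g k) y)) x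
      = (2 * (x k * pd j (lap^[q] (g k)) x) + nsq x * pd j (pd k (lap^[q] (g k))) x)
        + 4*(q:ℝ) * (pd j (pd k (lap^[q-1] (g k))) x
            + eul (pd j (pd k (lap^[q-1] (g k)))) x)
        + (2*(m:ℝ)*(q:ℝ) + 4*(q:ℝ)*((q:ℝ)-1)) * pd j (pd k (lap^[q-1] (g k))) x := by
    intro k
    have c1 : lap^[q] (pd j (g k)) = pd j (lap^[q] (g k)) :=
      (pd_lapIter q j (g k) (hg k)).symm
    have c2 : lap^[q-1] (pd j (g k)) = pd j (lap^[q-1] (g k)) :=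
      (pd_lapIter (q-1) j (g k) (hg k)).symm
    rw [lapIter_nsq_mul q (pd j (g k)) (by fun_prop), c1, c2]
    rw [pd_add k _ _ (by fun_prop) (by fun_prop) x,
      pd_add k _ _ (by fun_prop) (by fun_prop) x,
      pd_mul k nsq _ (by fun_prop) (by fun_prop) x,
      pd_const_mul k _ _ (by fun_prop) x,
      pd_const_mul k _ _ (by fun_prop) x,
      pd_eul k _ (by fun_prop) x, pd_nsq,
      pd_comm k j (lap^[q] (g k)) (by fun_prop) x,
      pd_comm k j (lap^[q-1] (g k)) (by fun_prop) x,
      show pd k (pd j (lap^[q-1] (g k))) = pd j (pd k (lap^[q-1] (g k)))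
        from funext (pd_comm k j (lap^[q-1] (g k)) (by fun_prop))]
    ring
  simp only [e]
  rw [eul_sum Finset.univ _ (by fun_prop) x]
  simp only [Finset.sum_add_distrib, ← Finset.mul_sum]

theorem Kd (hg : ∀ k, ContDiff ℝ (⊤ : ℕ∞) (g k)) (cc : ℝ) (x : Fin m → ℝ) :
    ∑ k, pd k (lap^[q] (fun y => y j * (2 * eul (g k) y + cc * g k y))) x
      = 2 * eul (lap^[q] (g j)) x + (4*(q:ℝ) + cc) * lap^[q] (g j) x
        + x j * (2 * eul (fun y => ∑ k, pd k (lap^[q] (g k)) y) x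
            + (2 + 4*(q:ℝ) + cc) * ∑ k, pd k (lap^[q] (g k)) x)
        + 2*(q:ℝ) * ((4 + 4*((q-1 : ℕ):ℝ) + cc) * ∑ k, pd j (pd k (lap^[q-1] (g k))) x
            + 2 * eul (fun y => ∑ k, pd j (pd k (lap^[q-1] (g k))) y) x) := by
  have e : ∀ k : Fin m, pd k (lap^[q] (fun y => y j * (2 * eul (g k) y + cc * g k y))) x
      = ((if j = k then 1 else 0) * (2 * eul (lap^[q] (g k)) x + (4*(q:ℝ) + cc) * lap^[q] (g k) x)
          + x j * (2 * (pd k (lap^[q] (g k)) x + eul (pd k (lap^[q] (g k))) x)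
              + (4*(q:ℝ) + cc) * pd k (lap^[q] (g k)) x))
        + 2*(q:ℝ) * ((4 + 4*((q-1 : ℕ):ℝ) + cc) * pd j (pd k (lap^[q-1] (g k))) x
            + 2 * eul (pd j (pd k (lap^[q-1] (g k)))) x) := by
    intro k
    have ew : lap^[q] (fun y => 2 * eul (g k) y + cc * g k y)
        = fun y => 2 * eul (lap^[q] (g k)) y + (4*(q:ℝ) + cc) * lap^[q] (g k) y := by
      funext y
      simp only [lapIter_add q (fun y => 2 * eul (g k) y) (fun y => cc * g k y)
          (by fun_prop) (by fun_prop),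
        lapIter_const_mul q 2 (eul (g k)) (by fun_prop),
        lapIter_const_mul q cc (g k) (hg k),
        lapIter_euler q (g k) (hg k)]
      ring
    have epw : pd j (fun y => 2 * eul (g k) y + cc * g k y)
        = fun y => 2 * (pd j (g k) y + eul (pd j (g k)) y) + cc * pd j (g k) y := by
      funext y
      rw [pd_add j _ _ (by fun_prop) (by fun_prop) y,
        pd_const_mul j 2 _ (by fun_prop) y, pd_const_mul j cc _ (hg k) y,
        pd_eul j (g k) (hg k) y]
    have ew2 : lap^[q-1] (pd j (fun y => 2 * eul (g k) y + cc * g k y))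
        = fun y => (2 + 4*((q-1 : ℕ):ℝ) + cc) * pd j (lap^[q-1] (g k)) y
          + 2 * eul (pd j (lap^[q-1] (g k))) y := by
      rw [epw]
      funext y
      have c2 : lap^[q-1] (pd j (g k)) = pd j (lap^[q-1] (g k)) :=
        (pd_lapIter (q-1) j (g k) (hg k)).symm
      simp only [lapIter_add (q-1) (fun y => 2 * (pd j (g k) y + eul (pd j (g k)) y))
          (fun y => cc * pd j (g k) y) (by fun_prop) (by fun_prop),
        lapIter_const_mul (q-1) 2 (fun y => pd j (g k) y + eul (pd j (g k)) y) (by fun_prop),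
        lapIter_const_mul (q-1) cc (pd j (g k)) (by fun_prop),
        lapIter_add (q-1) (pd j (g k)) (eul (pd j (g k))) (by fun_prop) (by fun_prop),
        lapIter_euler (q-1) (pd j (g k)) (by fun_prop), c2]
      ring
    rw [lapIter_coord_mul q j _ (by fun_prop), ew, ew2]
    simp (disch := fun_prop) only [pd_add, pd_mul, pd_const_mul, pd_eul, pd_coord, pd_const]
    rw [show pd k (pd j (lap^[q-1] (g k))) = pd j (pd k (lap^[q-1] (g k)))
        from funext (pd_comm k j (lap^[q-1] (g k)) (by fun_prop))]
    ring
  simp only [e]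
  rw [eul_sum Finset.univ (fun k => pd j (pd k (lap^[q-1] (g k)))) (by fun_prop) x,
    eul_sum Finset.univ (fun k => pd k (lap^[q] (g k))) (by fun_prop) x]
  simp only [Finset.sum_add_distrib, ← Finset.mul_sum, ite_mul, one_mul, zero_mul,
    Finset.sum_ite_eq Finset.univ j, Finset.mem_univ, if_true]
  ring

theorem K1 (hg : ∀ k, ContDiff ℝ (⊤ : ℕ∞) (g k)) (cc : ℝ)
    (hcc : cc = (m:ℝ) - 2*((q:ℝ)+1)) (x : Fin m → ℝ) :
    ∑ k, pd k (lap^[q] (fun y => 2 * (y k * g j y)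
        - 2 * ((if k = j then (1:ℝ) else 0) * (∑ l, y l * g l y))
        + nsq y * pd j (g k) y
        - y j * (2 * eul (g k) y + cc * g k y))) x
      = ((m:ℝ) + 2*(q:ℝ)) * lap^[q] (g j) x
        + nsq x * pd j (fun y => ∑ k, pd k (lap^[q] (g k)) y) x
        - x j * (2 * eul (fun y => ∑ k, pd k (lap^[q] (g k)) y) x
            + ((m:ℝ) + 2*(q:ℝ)) * (∑ k, pd k (lap^[q] (g k)) x)) := by
  have e : ∀ k : Fin m, pd k (lap^[q] (fun y => 2 * (y k * g j y)
        - 2 * ((if k = j then (1:ℝ) else 0) * (∑ l, y l * g l y))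
        + nsq y * pd j (g k) y
        - y j * (2 * eul (g k) y + cc * g k y))) x
      = 2 * pd k (lap^[q] (fun y => y k * g j y)) x
        - 2 * pd k (lap^[q] (fun y => (if k = j then (1:ℝ) else 0) * (∑ l, y l * g l y))) x
        + pd k (lap^[q] (fun y => nsq y * pd j (g k) y)) x
        - pd k (lap^[q] (fun y => y j * (2 * eul (g k) y + cc * g k y))) x := by
    intro k
    have split : lap^[q] (fun y => 2 * (y k * g j y)
          - 2 * ((if k = j then (1:ℝ) else 0) * (∑ l, y l * g l y))
          + nsq y * pd j (g k) y
          - y j * (2 * eul (g k) y + cc * g k y))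
        = fun y => 2 * lap^[q] (fun y => y k * g j y) y
          - 2 * lap^[q] (fun y => (if k = j then (1:ℝ) else 0) * (∑ l, y l * g l y)) y
          + lap^[q] (fun y => nsq y * pd j (g k) y) y
          - lap^[q] (fun y => y j * (2 * eul (g k) y + cc * g k y)) y := by
      funext y
      rw [lapIter_sub q _ _ (by fun_prop) (by fun_prop),
        lapIter_add q _ _ (by fun_prop) (by fun_prop),
        lapIter_sub q _ _ (by fun_prop) (by fun_prop),
        lapIter_const_mul q 2 _ (by fun_prop),
        lapIter_const_mul q 2 _ (by fun_prop)]
    rw [split]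
    simp (disch := fun_prop) only [pd_sub, pd_add, pd_const_mul]
  simp only [e]
  rw [Finset.sum_sub_distrib, Finset.sum_add_distrib, Finset.sum_sub_distrib,
    ← Finset.mul_sum, ← Finset.mul_sum]
  rw [Ka g j q hg x, Kb g j q hg x, Kc g j q hg x, Kd g j q hg cc x]
  rw [← pd_sum j Finset.univ (fun k => pd k (lap^[q] (g k))) (by fun_prop) x]
  subst hcc
  cases q with
  | zero => push_cast; ring
  | succ s =>
    simp only [Nat.add_sub_cancel]
    rw [aggA s (g j) (hg j) x]
    push_cast
    ring

theorem KEY (hg : ∀ k, ContDiff ℝ (⊤ : ℕ∞) (g k)) (cc : ℝ)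
    (hcc : cc = (m:ℝ) - 2*((q:ℝ)+1)) (i : Fin m) (x : Fin m → ℝ) :
    pd i (fun z => ∑ k, pd k (lap^[q] (fun y => 2 * (y k * g j y)
        - 2 * ((if k = j then (1:ℝ) else 0) * (∑ l, y l * g l y))
        + nsq y * pd j (g k) y
        - y j * (2 * eul (g k) y + cc * g k y))) z) x
      - (2 * (x i * pd j (fun y => ∑ k, pd k (lap^[q] (g k)) y) x)
        - 2 * ((if i = j then (1:ℝ) else 0)
            * (∑ l, x l * pd l (fun y => ∑ k, pd k (lap^[q] (g k)) y) x))
        + nsq x * pd j (pd i (fun y => ∑ k, pd k (lap^[q] (g k)) y)) x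
        - x j * (2 * eul (pd i (fun y => ∑ k, pd k (lap^[q] (g k)) y)) x
            + cc * pd i (fun y => ∑ k, pd k (lap^[q] (g k)) y) x))
      = -4 * ((q:ℝ)+1) * x j * pd i (fun y => ∑ k, pd k (lap^[q] (g k)) y) x
        + ((m:ℝ) + 2*(q:ℝ)) * (pd i (lap^[q] (g j)) x
            - (if i = j then (1:ℝ) else 0) * ∑ k, pd k (lap^[q] (g k)) x) := by
  have hD : ContDiff ℝ (⊤ : ℕ∞) (fun y => ∑ k, pd k (lap^[q] (g k)) y) := by fun_prop
  have e1 : (fun z => ∑ k, pd k (lap^[q] (fun y => 2 * (y k * g j y)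
        - 2 * ((if k = j then (1:ℝ) else 0) * (∑ l, y l * g l y))
        + nsq y * pd j (g k) y
        - y j * (2 * eul (g k) y + cc * g k y))) z)
      = fun z => ((m:ℝ) + 2*(q:ℝ)) * lap^[q] (g j) z
        + nsq z * pd j (fun y => ∑ k, pd k (lap^[q] (g k)) y) z
        - z j * (2 * eul (fun y => ∑ k, pd k (lap^[q] (g k)) y) z
            + ((m:ℝ) + 2*(q:ℝ)) * (∑ k, pd k (lap^[q] (g k)) z)) :=
    funext (K1 g j q hg cc hcc)
  rw [e1]
  simp (disch := fun_prop) only [pd_sub, pd_add, pd_mul, pd_const_mul, pd_coord, pd_const,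
    pd_nsq, pd_eul]
  rw [pd_comm i j (fun y => ∑ k, pd k (lap^[q] (g k)) y) hD x]
  rw [show (if j = i then (1:ℝ) else 0) = (if i = j then 1 else 0) from by simp [eq_comm]]
  rw [show eul (fun y => ∑ k, pd k (lap^[q] (g k)) y) x
      = ∑ l, x l * pd l (fun y => ∑ k, pd k (lap^[q] (g k)) y) x from rfl]
  subst hcc
  push_cast
  ring

end KLemmas

/-! ### Fn-level calculus -/

theorem smooth_Dx (i : Fin m) (f : ((Fin m → ℝ) × (Fin m → ℝ)) → ℝ)
    (hf : ContDiff ℝ (⊤ : ℕ∞) f) : ContDiff ℝ (⊤ : ℕ∞) (Dx i f) :=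
  (hf.fderiv_right (by simp)).clm_apply contDiff_const

theorem smooth_Du (i : Fin m) (f : ((Fin m → ℝ) × (Fin m → ℝ)) → ℝ)
    (hf : ContDiff ℝ (⊤ : ℕ∞) f) : ContDiff ℝ (⊤ : ℕ∞) (Du i f) :=
  (hf.fderiv_right (by simp)).clm_apply contDiff_const

@[fun_prop] theorem smooth_Dx' (i : Fin m) (f : ((Fin m → ℝ) × (Fin m → ℝ)) → ℝ)
    (hf : ContDiff ℝ (⊤ : ℕ∞) f) : ContDiff ℝ (⊤ : ℕ∞) (fun p => Dx i f p) :=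
  smooth_Dx i f hf

@[fun_prop] theorem smooth_Du' (i : Fin m) (f : ((Fin m → ℝ) × (Fin m → ℝ)) → ℝ)
    (hf : ContDiff ℝ (⊤ : ℕ∞) f) : ContDiff ℝ (⊤ : ℕ∞) (fun p => Du i f p) :=
  smooth_Du i f hf

@[fun_prop] theorem smooth_sumFn {ι : Type*} (s : Finset ι)
    (F : ι → ((Fin m → ℝ) × (Fin m → ℝ)) → ℝ)
    (hF : ∀ i, ContDiff ℝ (⊤ : ℕ∞) (F i)) : ContDiff ℝ (⊤ : ℕ∞) (fun p => ∑ i ∈ s, F i p) :=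
  ContDiff.sum fun i _ => hF i

theorem daF {f : ((Fin m → ℝ) × (Fin m → ℝ)) → ℝ} (hf : ContDiff ℝ (⊤ : ℕ∞) f)
    (p : (Fin m → ℝ) × (Fin m → ℝ)) : DifferentiableAt ℝ f p :=
  (hf.differentiable (by simp)).differentiableAt

theorem Dx_mul (i : Fin m) (f h : Fn m) (hf : ContDiff ℝ (⊤ : ℕ∞) f) (hh : ContDiff ℝ (⊤ : ℕ∞) h)
    (p : (Fin m → ℝ) × (Fin m → ℝ)) :
    Dx i (fun q => f q * h q) p = Dx i f p * h p + f p * Dx i h p := by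
  simp [Dx, fderiv_fun_mul (daF hf p) (daF hh p)]; ring

theorem Du_mul (i : Fin m) (f h : Fn m) (hf : ContDiff ℝ (⊤ : ℕ∞) f) (hh : ContDiff ℝ (⊤ : ℕ∞) h)
    (p : (Fin m → ℝ) × (Fin m → ℝ)) :
    Du i (fun q => f q * h q) p = Du i f p * h p + f p * Du i h p := by
  simp [Du, fderiv_fun_mul (daF hf p) (daF hh p)]; ring

theorem Dx_sum (i : Fin m) {ι : Type*} (s : Finset ι) (F : ι → Fn m)
    (hF : ∀ l, ContDiff ℝ (⊤ : ℕ∞) (F l)) (p : (Fin m → ℝ) × (Fin m → ℝ)) :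
    Dx i (fun q => ∑ l ∈ s, F l q) p = ∑ l ∈ s, Dx i (F l) p := by
  simp [Dx, fderiv_fun_sum (fun l _ => daF (hF l) p)]

theorem Du_sum (i : Fin m) {ι : Type*} (s : Finset ι) (F : ι → Fn m)
    (hF : ∀ l, ContDiff ℝ (⊤ : ℕ∞) (F l)) (p : (Fin m → ℝ) × (Fin m → ℝ)) :
    Du i (fun q => ∑ l ∈ s, F l q) p = ∑ l ∈ s, Du i (F l) p := by
  simp [Du, fderiv_fun_sum (fun l _ => daF (hF l) p)]

theorem Dx_lift (i : Fin m) (h : (Fin m → ℝ) → ℝ) (hh : ContDiff ℝ (⊤ : ℕ∞) h)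
    (p : (Fin m → ℝ) × (Fin m → ℝ)) :
    Dx i (fun q => h q.1) p = pd i h p.1 := by
  have : (fun q : (Fin m → ℝ) × (Fin m → ℝ) => h q.1) = h ∘ Prod.fst := rfl
  rw [Dx, this, fderiv_comp p (da hh p.1) differentiableAt_fst]
  simp [fderiv_fst, pd]

theorem Du_lift (i : Fin m) (h : (Fin m → ℝ) → ℝ) (hh : ContDiff ℝ (⊤ : ℕ∞) h)
    (p : (Fin m → ℝ) × (Fin m → ℝ)) :
    Du i (fun q => h q.1) p = 0 := by
  have : (fun q : (Fin m → ℝ) × (Fin m → ℝ) => h q.1) = h ∘ Prod.fst := rfl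
  rw [Du, this, fderiv_comp p (da hh p.1) differentiableAt_fst]
  simp [fderiv_fst]

theorem Dx_ucoord (i k : Fin m) (p : (Fin m → ℝ) × (Fin m → ℝ)) :
    Dx i (fun q : (Fin m → ℝ) × (Fin m → ℝ) => q.2 k) p = 0 := by
  have : (fun q : (Fin m → ℝ) × (Fin m → ℝ) => q.2 k)
      = (ContinuousLinearMap.proj k).comp (ContinuousLinearMap.snd ℝ (Fin m → ℝ) (Fin m → ℝ)) := rfl
  rw [Dx, this, ContinuousLinearMap.fderiv]
  simp

theorem Du_ucoord (i k : Fin m) (p : (Fin m → ℝ) × (Fin m → ℝ)) :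
    Du i (fun q : (Fin m → ℝ) × (Fin m → ℝ) => q.2 k) p = if k = i then 1 else 0 := by
  have : (fun q : (Fin m → ℝ) × (Fin m → ℝ) => q.2 k)
      = (ContinuousLinearMap.proj k).comp (ContinuousLinearMap.snd ℝ (Fin m → ℝ) (Fin m → ℝ)) := rfl
  rw [Du, this, ContinuousLinearMap.fderiv]
  simp [Pi.single_apply]

/-! ### degree-1 structure -/

section Deg1
variable (f : Fn m) (hf : ContDiff ℝ (⊤ : ℕ∞) f)
  (hdeg1 : ∀ (x : Fin m → ℝ) (c : ℝ) (u : Fin m → ℝ), f (x, c • u) = c * f (x, u))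
include hf hdeg1

theorem euler_u (p : (Fin m → ℝ) × (Fin m → ℝ)) :
    f p = fderiv ℝ f p (0, p.2) := by
  have hA : HasDerivAt (fun c : ℝ => (p.1, c • p.2)) ((0 : Fin m → ℝ), p.2) 1 := by
    have h2 : HasDerivAt (fun c : ℝ => c • p.2) ((1:ℝ) • p.2) 1 :=
      (hasDerivAt_id 1).smul_const p.2
    rw [one_smul] at h2
    exact (hasDerivAt_const (x := (1:ℝ)) (c := p.1)).prodMk h2
  have hcomp : HasDerivAt (fun c : ℝ => f (p.1, c • p.2)) (fderiv ℝ f (p.1, (1:ℝ) • p.2) (0, p.2)) 1 := by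
    have := (daF hf (p.1, (1:ℝ) • p.2)).hasFDerivAt.comp_hasDerivAt 1 hA
    simpa [Function.comp_def] using this
  have heq : (fun c : ℝ => f (p.1, c • p.2)) = fun c => c * f (p.1, p.2) := by
    funext c; rw [hdeg1]
  rw [heq] at hcomp
  have hmul : HasDerivAt (fun c : ℝ => c * f (p.1, p.2)) (f (p.1, p.2)) 1 := by
    simpa using (hasDerivAt_id (1:ℝ)).mul_const (f (p.1, p.2))
  have := hcomp.unique hmul
  rw [one_smul] at this
  rw [← this]

theorem Du_scale (k : Fin m) (x : Fin m → ℝ) (c : ℝ) (u : Fin m → ℝ) :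
    c * Du k f (x, c • u) = c * Du k f (x, u) := by
  set L : (Fin m → ℝ) →L[ℝ] (Fin m → ℝ) × (Fin m → ℝ) :=
    c • ContinuousLinearMap.inr ℝ (Fin m → ℝ) (Fin m → ℝ) with hL
  have hA : HasFDerivAt (fun v : Fin m → ℝ => (x, c • v)) L u := by
    have : (fun v : Fin m → ℝ => (x, c • v)) = fun v => ((x, 0) + L v) := by
      funext v
      simp [hL, Prod.ext_iff]
    rw [this]
    exact L.hasFDerivAt.const_add (x, 0)
  have hphi : HasFDerivAt (fun v : Fin m → ℝ => f (x, c • v))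
      ((fderiv ℝ f (x, c • u)).comp L) u :=
    (daF hf (x, c • u)).hasFDerivAt.comp u hA
  have hpsi : HasFDerivAt (fun v : Fin m → ℝ => c * f (x, v))
      (c • ((fderiv ℝ f (x, u)).comp (ContinuousLinearMap.inr ℝ (Fin m → ℝ) (Fin m → ℝ)))) u := by
    have hAx : HasFDerivAt (fun v : Fin m → ℝ => (x, v))
        (ContinuousLinearMap.inr ℝ (Fin m → ℝ) (Fin m → ℝ)) u := by
      have : (fun v : Fin m → ℝ => (x, v))
          = fun v => ((x, 0) + ContinuousLinearMap.inr ℝ (Fin m → ℝ) (Fin m → ℝ) v) := by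
        funext v; simp [Prod.ext_iff]
      rw [this]
      exact (ContinuousLinearMap.inr ℝ (Fin m → ℝ) (Fin m → ℝ)).hasFDerivAt.const_add (x, 0)
    exact ((daF hf (x, u)).hasFDerivAt.comp u hAx).const_mul c
  have heq : (fun v : Fin m → ℝ => f (x, c • v)) = fun v : Fin m → ℝ => c * f (x, v) := by
    funext v; rw [hdeg1]
  rw [heq] at hphi
  have := hphi.unique hpsi
  have happ := congrArg (fun (T : (Fin m → ℝ) →L[ℝ] ℝ) => T (Pi.single k 1)) this
  have key : fderiv ℝ f (x, c • u) (L (Pi.single k 1)) = c * Du k f (x, c • u) := by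
    have h1 : L (Pi.single k 1)
        = c • ((((0 : Fin m → ℝ), (Pi.single k 1 : Fin m → ℝ))) :
            (Fin m → ℝ) × (Fin m → ℝ)) := rfl
    rw [h1, map_smul]
    rfl
  have key2 : (c • ((fderiv ℝ f (x, u)).comp
      (ContinuousLinearMap.inr ℝ (Fin m → ℝ) (Fin m → ℝ)))) (Pi.single k 1)
      = c * Du k f (x, u) := rfl
  exact key.symm.trans (happ.trans key2)

theorem Du_indep (k : Fin m) (x u : Fin m → ℝ) :
    Du k f (x, u) = Du k f (x, 0) := by
  have hcong : ∀ c : ℝ, c ≠ 0 → Du k f (x, c • u) = Du k f (x, u) := by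
    intro c hc
    have := Du_scale f hf hdeg1 k x c u
    exact mul_left_cancel₀ hc this
  have hcont : Continuous fun c : ℝ => Du k f (x, c • u) := by
    have h1 : Continuous (Du k f) := (smooth_Du k f hf).continuous
    exact h1.comp (continuous_const.prodMk ((continuous_id.smul continuous_const)))
  have h0 : Filter.Tendsto (fun c : ℝ => Du k f (x, c • u)) (nhdsWithin 0 {0}ᶜ)
      (nhds (Du k f (x, (0:ℝ) • u))) :=
    (hcont.tendsto 0).mono_left nhdsWithin_le_nhds
  have h1 : Filter.Tendsto (fun c : ℝ => Du k f (x, c • u)) (nhdsWithin 0 {0}ᶜ)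
      (nhds (Du k f (x, u))) := by
    refine Filter.Tendsto.congr' ?_ tendsto_const_nhds
    filter_upwards [self_mem_nhdsWithin] with c hc
    exact (hcong c hc).symm
  have := tendsto_nhds_unique h1 h0
  rw [this, zero_smul]

theorem rep_f (p : (Fin m → ℝ) × (Fin m → ℝ)) :
    f p = ∑ k, p.2 k * Du k f (p.1, 0) := by
  have he := euler_u f hf hdeg1 p
  have hsnd : p.2 = ∑ k, p.2 k • (Pi.single k 1 : Fin m → ℝ) := by
    funext j
    rw [Finset.sum_apply]
    simp [Pi.single_apply]
  have hdecomp : (((0 : Fin m → ℝ), p.2) : (Fin m → ℝ) × (Fin m → ℝ))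
      = ∑ k, p.2 k • (((0 : Fin m → ℝ), (Pi.single k 1 : Fin m → ℝ)) :
          (Fin m → ℝ) × (Fin m → ℝ)) := by
    rw [Prod.ext_iff]
    constructor
    · rw [Prod.fst_sum]; simp
    · rw [Prod.snd_sum]; simpa using hsnd
  rw [he, hdecomp, map_sum]
  refine Finset.sum_congr rfl fun k _ => ?_
  rw [map_smul]
  rw [show Du k f (p.1, 0) = Du k f (p.1, p.2) from (Du_indep f hf hdeg1 k p.1 p.2).symm]
  rfl

end Deg1

/-! ### operators on representations -/

section Rep
variable (h : Fin m → (Fin m → ℝ) → ℝ)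

theorem DxRep (hh : ∀ k, ContDiff ℝ (⊤ : ℕ∞) (h k)) (i : Fin m) :
    Dx i (fun p => ∑ k, p.2 k * h k p.1) = fun p => ∑ k, p.2 k * pd i (h k) p.1 := by
  funext p
  rw [Dx_sum i Finset.univ (fun k => fun q => q.2 k * h k q.1) (by fun_prop) p]
  refine Finset.sum_congr rfl fun k _ => ?_
  rw [Dx_mul i (fun q => q.2 k) (fun q => h k q.1) (by fun_prop) (by fun_prop) p,
    Dx_ucoord, Dx_lift i (h k) (hh k) p]
  ring

theorem DuRep (hh : ∀ k, ContDiff ℝ (⊤ : ℕ∞) (h k)) (l : Fin m)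
    (p : (Fin m → ℝ) × (Fin m → ℝ)) :
    Du l (fun p => ∑ k, p.2 k * h k p.1) p = h l p.1 := by
  rw [Du_sum l Finset.univ (fun k => fun q => q.2 k * h k q.1) (by fun_prop) p]
  have e : ∀ k : Fin m, Du l (fun q => q.2 k * h k q.1) p
      = if k = l then h k p.1 else 0 := by
    intro k
    rw [Du_mul l (fun q => q.2 k) (fun q => h k q.1) (by fun_prop) (by fun_prop) p,
      Du_ucoord, Du_lift l (h k) (hh k) p]
    split <;> ring
  simp only [e]
  simp [Finset.sum_ite_eq' Finset.univ l (fun k => h k p.1)]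

theorem DeltaXRep (hh : ∀ k, ContDiff ℝ (⊤ : ℕ∞) (h k)) :
    DeltaX (fun p => ∑ k, p.2 k * h k p.1) = fun p => ∑ k, p.2 k * lap (h k) p.1 := by
  funext p
  rw [show DeltaX (fun p => ∑ k, p.2 k * h k p.1) p
      = ∑ i, Dx i (Dx i (fun p => ∑ k, p.2 k * h k p.1)) p from rfl]
  have e : ∀ i : Fin m, Dx i (Dx i (fun p => ∑ k, p.2 k * h k p.1)) p
      = ∑ k, p.2 k * pd i (pd i (h k)) p.1 := by
    intro i
    rw [DxRep h hh i, DxRep (fun k => pd i (h k)) (by fun_prop) i]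
  simp only [e]
  rw [Finset.sum_comm]
  refine Finset.sum_congr rfl fun k _ => ?_
  rw [lap_apply, Finset.mul_sum]

theorem DeltaXIterRep (hh : ∀ k, ContDiff ℝ (⊤ : ℕ∞) (h k)) (s : ℕ) :
    DeltaX^[s] (fun p => ∑ k, p.2 k * h k p.1)
      = fun p => ∑ k, p.2 k * lap^[s] (h k) p.1 := by
  induction s generalizing h with
  | zero => simp
  | succ s ih =>
    rw [Function.iterate_succ_apply, DeltaXRep h hh,
      ih (fun k => lap (h k)) (by fun_prop)]
    simp only [← Function.iterate_succ_apply lap]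

theorem DuDxRep (hh : ∀ k, ContDiff ℝ (⊤ : ℕ∞) (h k)) (p : (Fin m → ℝ) × (Fin m → ℝ)) :
    DuDx (fun p => ∑ k, p.2 k * h k p.1) p = ∑ i, pd i (h i) p.1 := by
  rw [show DuDx (fun p => ∑ k, p.2 k * h k p.1) p
      = ∑ i, Du i (Dx i (fun p => ∑ k, p.2 k * h k p.1)) p from rfl]
  refine Finset.sum_congr rfl fun i _ => ?_
  rw [DxRep h hh i, DuRep (fun k => pd i (h k)) (by fun_prop) i p]

theorem uDxLift (W : (Fin m → ℝ) → ℝ) (hW : ContDiff ℝ (⊤ : ℕ∞) W) (p : (Fin m → ℝ) × (Fin m → ℝ)) :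
    uDx (fun q => W q.1) p = ∑ i, p.2 i * pd i W p.1 := by
  rw [show uDx (fun q => W q.1) p = ∑ i, p.2 i * Dx i (fun q => W q.1) p from rfl]
  exact Finset.sum_congr rfl fun i _ => by rw [Dx_lift i W hW p]

theorem xDuRep (hh : ∀ k, ContDiff ℝ (⊤ : ℕ∞) (h k)) (p : (Fin m → ℝ) × (Fin m → ℝ)) :
    xDu (fun p => ∑ k, p.2 k * h k p.1) p = ∑ l, p.1 l * h l p.1 := by
  rw [show xDu (fun p => ∑ k, p.2 k * h k p.1) p
      = ∑ l, p.1 l * Du l (fun p => ∑ k, p.2 k * h k p.1) p from rfl]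
  exact Finset.sum_congr rfl fun l _ => by rw [DuRep h hh l p]

theorem EulerXRep (hh : ∀ k, ContDiff ℝ (⊤ : ℕ∞) (h k)) (p : (Fin m → ℝ) × (Fin m → ℝ)) :
    EulerX (fun p => ∑ k, p.2 k * h k p.1) p = ∑ k, p.2 k * eul (h k) p.1 := by
  rw [show EulerX (fun p => ∑ k, p.2 k * h k p.1) p
      = ∑ i, p.1 i * Dx i (fun p => ∑ k, p.2 k * h k p.1) p from rfl]
  have e : ∀ i : Fin m, p.1 i * Dx i (fun p => ∑ k, p.2 k * h k p.1) p
      = ∑ k, p.2 k * (p.1 i * pd i (h k) p.1) := by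
    intro i
    rw [DxRep h hh i, Finset.mul_sum]
    exact Finset.sum_congr rfl fun k _ => by ring
  simp only [e]
  rw [Finset.sum_comm]
  refine Finset.sum_congr rfl fun k _ => ?_
  rw [show eul (h k) p.1 = ∑ i, p.1 i * pd i (h k) p.1 from rfl, Finset.mul_sum]

theorem SCTRep (hh : ∀ k, ContDiff ℝ (⊤ : ℕ∞) (h k)) (n : ℕ) (j : Fin m)
    (p : (Fin m → ℝ) × (Fin m → ℝ)) :
    SCT n j (fun p => ∑ k, p.2 k * h k p.1) p
      = ∑ k, p.2 k * (2 * (p.1 k * h j p.1)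
          - 2 * ((if k = j then (1:ℝ) else 0) * (∑ l, p.1 l * h l p.1))
          + nsq p.1 * pd j (h k) p.1
          - p.1 j * (2 * eul (h k) p.1 + ((m:ℝ) - 2 * n) * h k p.1)) := by
  rw [show SCT n j (fun p => ∑ k, p.2 k * h k p.1) p
      = 2 * (∑ i, p.2 i * p.1 i) * Du j (fun p => ∑ k, p.2 k * h k p.1) p
        - 2 * p.2 j * xDu (fun p => ∑ k, p.2 k * h k p.1) p
        + (∑ i, p.1 i ^ 2) * Dx j (fun p => ∑ k, p.2 k * h k p.1) p
        - p.1 j * (2 * EulerX (fun p => ∑ k, p.2 k * h k p.1) p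
            + ((m : ℝ) - 2 * n) * (∑ k, p.2 k * h k p.1)) from rfl]
  rw [DuRep h hh j p, xDuRep h hh p, DxRep h hh j, EulerXRep h hh p]
  have t1 : 2 * (∑ i, p.2 i * p.1 i) * h j p.1
      = ∑ k, p.2 k * (2 * (p.1 k * h j p.1)) := by
    rw [Finset.mul_sum, Finset.sum_mul]
    exact Finset.sum_congr rfl fun k _ => by ring
  have t2 : 2 * p.2 j * (∑ l, p.1 l * h l p.1)
      = ∑ k, p.2 k * (2 * ((if k = j then (1:ℝ) else 0) * (∑ l, p.1 l * h l p.1))) := by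
    have e : ∀ k : Fin m, p.2 k * (2 * ((if k = j then (1:ℝ) else 0) * (∑ l, p.1 l * h l p.1)))
        = if k = j then p.2 k * (2 * (∑ l, p.1 l * h l p.1)) else 0 := by
      intro k; split <;> simp
    simp only [e, Finset.sum_ite_eq' Finset.univ j, Finset.mem_univ, if_true]
    ring
  have t3 : (∑ i, p.1 i ^ 2) * (∑ k, p.2 k * pd j (h k) p.1)
      = ∑ k, p.2 k * (nsq p.1 * pd j (h k) p.1) := by
    rw [show (∑ i, p.1 i ^ 2) = nsq p.1 from by
        rw [show nsq p.1 = ∑ i, p.1 i * p.1 i from rfl]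
        exact Finset.sum_congr rfl fun i _ => pow_two (p.1 i),
      Finset.mul_sum]
    exact Finset.sum_congr rfl fun k _ => by ring
  have t4 : p.1 j * (2 * (∑ k, p.2 k * eul (h k) p.1)
        + ((m:ℝ) - 2 * n) * (∑ k, p.2 k * h k p.1))
      = ∑ k, p.2 k * (p.1 j * (2 * eul (h k) p.1 + ((m:ℝ) - 2 * n) * h k p.1)) := by
    rw [Finset.mul_sum, Finset.mul_sum, ← Finset.sum_add_distrib, Finset.mul_sum]
    exact Finset.sum_congr rfl fun k _ => by ring
  rw [t1, t2, t3, t4, ← Finset.sum_sub_distrib, ← Finset.sum_add_distrib,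
    ← Finset.sum_sub_distrib]
  exact Finset.sum_congr rfl fun k _ => by ring

end Rep


/-- The commutator of `⟨u,D_x⟩⟨D_u,D_x⟩Δ_x^{n-1}` with `C_{2n}` equals
`-4n x_j⟨u,D_x⟩⟨D_u,D_x⟩Δ_x^{n-1} + (m+2n-2)(⟨u,D_x⟩∂_{u_j} - u_j⟨D_u,D_x⟩)Δ_x^{n-1}`
on smooth functions `f(x,u)` of degree 1 in `u`. -/
theorem mixed_term_SCT_commutator (m n : ℕ) (hn : 1 ≤ n) (j : Fin m) (f : Fn m)
    (hf : ContDiff ℝ (⊤ : ℕ∞) f)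
    (hdeg1 : ∀ (x : Fin m → ℝ) (c : ℝ) (u : Fin m → ℝ), f (x, c • u) = c * f (x, u)) :
    ∀ p, uDx (DuDx ((DeltaX (m := m))^[n-1] (SCT n j f))) p
        - SCT n j (uDx (DuDx ((DeltaX (m := m))^[n-1] f))) p
      = -4 * n * p.1 j * uDx (DuDx ((DeltaX (m := m))^[n-1] f)) p
        + ((m : ℝ) + 2 * n - 2) *
          (uDx (Du j ((DeltaX (m := m))^[n-1] f)) p
            - p.2 j * DuDx ((DeltaX (m := m))^[n-1] f) p) := by
  obtain ⟨q, rfl⟩ : ∃ q, n = q + 1 := ⟨n - 1, (Nat.succ_pred_eq_of_pos hn).symm⟩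
  simp only [Nat.add_sub_cancel]
  intro p
  obtain ⟨g, hg, hrep⟩ : ∃ g : Fin m → (Fin m → ℝ) → ℝ,
      (∀ k, ContDiff ℝ (⊤ : ℕ∞) (g k)) ∧ f = fun p => ∑ k, p.2 k * g k p.1 :=
    ⟨fun k x => Du k f (x, 0),
      fun k => (smooth_Du k f hf).comp (contDiff_id.prodMk contDiff_const),
      funext fun p' => rep_f f hf hdeg1 p'⟩
  subst hrep
  clear hf hdeg1
  -- the G family produced by SCT
  have hS : SCT (q+1) j (fun p => ∑ k, p.2 k * g k p.1)
      = fun p' => ∑ k, p'.2 k *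
          (fun y => 2 * (y k * g j y)
            - 2 * ((if k = j then (1:ℝ) else 0) * (∑ l, y l * g l y))
            + nsq y * pd j (g k) y
            - y j * (2 * eul (g k) y + ((m:ℝ) - 2 * ((q+1 : ℕ) : ℝ)) * g k y)) p'.1 := by
    funext p'
    exact SCTRep g hg (q+1) j p'
  rw [hS]
  have hGs : ∀ k, ContDiff ℝ (⊤ : ℕ∞) ((fun k => fun y => 2 * (y k * g j y)
      - 2 * ((if k = j then (1:ℝ) else 0) * (∑ l, y l * g l y))
      + nsq y * pd j (g k) y
      - y j * (2 * eul (g k) y + ((m:ℝ) - 2 * ((q+1 : ℕ) : ℝ)) * g k y)) k) := by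
    intro k; fun_prop
  rw [DeltaXIterRep _ hGs q]
  have hDuDxG : DuDx (fun p' => ∑ k, p'.2 k * lap^[q] ((fun k => fun y => 2 * (y k * g j y)
        - 2 * ((if k = j then (1:ℝ) else 0) * (∑ l, y l * g l y))
        + nsq y * pd j (g k) y
        - y j * (2 * eul (g k) y + ((m:ℝ) - 2 * ((q+1 : ℕ) : ℝ)) * g k y)) k) p'.1)
      = fun p' => (fun z => ∑ k, pd k (lap^[q] (fun y => 2 * (y k * g j y)
          - 2 * ((if k = j then (1:ℝ) else 0) * (∑ l, y l * g l y))
          + nsq y * pd j (g k) y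
          - y j * (2 * eul (g k) y + ((m:ℝ) - 2 * ((q+1 : ℕ) : ℝ)) * g k y))) z) p'.1 := by
    funext p'
    exact DuDxRep _ (fun k => by fun_prop) p'
  rw [hDuDxG]
  rw [uDxLift (fun z => ∑ k, pd k (lap^[q] (fun y => 2 * (y k * g j y)
      - 2 * ((if k = j then (1:ℝ) else 0) * (∑ l, y l * g l y))
      + nsq y * pd j (g k) y
      - y j * (2 * eul (g k) y + ((m:ℝ) - 2 * ((q+1 : ℕ) : ℝ)) * g k y))) z)
    (by fun_prop) p]
  -- the plain pipeline on f itself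
  rw [DeltaXIterRep g hg q]
  have h2 : DuDx (fun p' => ∑ k, p'.2 k * lap^[q] (g k) p'.1)
      = fun p' => (fun z => ∑ k, pd k (lap^[q] (g k)) z) p'.1 := by
    funext p'
    exact DuDxRep _ (fun k => by fun_prop) p'
  rw [h2]
  have h3 : uDx (fun p' => (fun z => ∑ k, pd k (lap^[q] (g k)) z) p'.1)
      = fun p' => ∑ i, p'.2 i * pd i (fun z => ∑ k, pd k (lap^[q] (g k)) z) p'.1 := by
    funext p'
    exact uDxLift (fun z => ∑ k, pd k (lap^[q] (g k)) z) (by fun_prop) p'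
  rw [h3]
  rw [SCTRep (fun l => pd l (fun z => ∑ k, pd k (lap^[q] (g k)) z))
    (fun l => by fun_prop) (q+1) j p]
  have h4 : Du j (fun p' => ∑ k, p'.2 k * lap^[q] (g k) p'.1)
      = fun p' => lap^[q] (g j) p'.1 := by
    funext p'
    exact DuRep _ (fun k => by fun_prop) j p'
  rw [h4, uDxLift (lap^[q] (g j)) (by fun_prop) p]
  -- now apply KEY pointwise
  have key := fun i => KEY g j q hg ((m:ℝ) - 2 * ((q+1 : ℕ) : ℝ))
    (by push_cast; ring) i p.1
  rw [← Finset.sum_sub_distrib]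
  have combine : ∀ i : Fin m,
      p.2 i * pd i (fun z => ∑ k, pd k (lap^[q] (fun y => 2 * (y k * g j y)
          - 2 * ((if k = j then (1:ℝ) else 0) * (∑ l, y l * g l y))
          + nsq y * pd j (g k) y
          - y j * (2 * eul (g k) y + ((m:ℝ) - 2 * ((q+1 : ℕ) : ℝ)) * g k y))) z) p.1
        - p.2 i * (2 * (p.1 i * pd j (fun z => ∑ k, pd k (lap^[q] (g k)) z) p.1)
          - 2 * ((if i = j then (1:ℝ) else 0)
              * (∑ l, p.1 l * pd l (fun z => ∑ k, pd k (lap^[q] (g k)) z) p.1))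
          + nsq p.1 * pd j (pd i (fun z => ∑ k, pd k (lap^[q] (g k)) z)) p.1
          - p.1 j * (2 * eul (pd i (fun z => ∑ k, pd k (lap^[q] (g k)) z)) p.1
              + ((m:ℝ) - 2 * ((q+1 : ℕ) : ℝ))
                * pd i (fun z => ∑ k, pd k (lap^[q] (g k)) z) p.1))
      = p.2 i * (-4 * ((q:ℝ)+1) * p.1 j
            * pd i (fun z => ∑ k, pd k (lap^[q] (g k)) z) p.1
          + ((m:ℝ) + 2*(q:ℝ)) * (pd i (lap^[q] (g j)) p.1
            - (if i = j then (1:ℝ) else 0) * ∑ k, pd k (lap^[q] (g k)) p.1)) := by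
    intro i
    rw [← mul_sub, key i]
  rw [Finset.sum_congr rfl (fun i _ => combine i)]
  -- final algebra
  have expand : ∀ i : Fin m, p.2 i * (-4 * ((q:ℝ)+1) * p.1 j
        * pd i (fun z => ∑ k, pd k (lap^[q] (g k)) z) p.1
      + ((m:ℝ) + 2*(q:ℝ)) * (pd i (lap^[q] (g j)) p.1
        - (if i = j then (1:ℝ) else 0) * ∑ k, pd k (lap^[q] (g k)) p.1))
      = -4 * ((q:ℝ)+1) * p.1 j
          * (p.2 i * pd i (fun z => ∑ k, pd k (lap^[q] (g k)) z) p.1)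
        + ((m:ℝ) + 2*(q:ℝ)) * (p.2 i * pd i (lap^[q] (g j)) p.1)
        - ((m:ℝ) + 2*(q:ℝ)) * (if i = j then (1:ℝ) else 0)
            * (p.2 i * ∑ k, pd k (lap^[q] (g k)) p.1) := by
    intro i; ring
  rw [Finset.sum_congr rfl (fun i _ => expand i)]
  rw [Finset.sum_sub_distrib, Finset.sum_add_distrib, ← Finset.mul_sum, ← Finset.mul_sum]
  have collapse : ∑ i, ((m:ℝ) + 2*(q:ℝ)) * (if i = j then (1:ℝ) else 0)
      * (p.2 i * ∑ k, pd k (lap^[q] (g k)) p.1)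
      = ((m:ℝ) + 2*(q:ℝ)) * (p.2 j * ∑ k, pd k (lap^[q] (g k)) p.1) := by
    have e : ∀ i : Fin m, ((m:ℝ) + 2*(q:ℝ)) * (if i = j then (1:ℝ) else 0)
        * (p.2 i * ∑ k, pd k (lap^[q] (g k)) p.1)
        = if i = j then ((m:ℝ) + 2*(q:ℝ)) * (p.2 i * ∑ k, pd k (lap^[q] (g k)) p.1)
          else 0 := by
      intro i; split <;> ring
    simp only [e, Finset.sum_ite_eq' Finset.univ j, Finset.mem_univ, if_true]
  rw [collapse]
  push_cast
  ring
end
end
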